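/- arXiv:cs/0609040 — 10 statements merged into one kernel-verified Lean document; each statement's English description precedes it below -/
import Mathlib

section
/- In a completely iterative algebra, the assignment of unique solutions is compositional: for flat equation morphisms e : X → HX + Y and f : Y → HY + A, one has (f† ▹ e)† = (f ⊞ e)† ∘ inl, where f† ▹ e = (id_{HX} + f†) ∘ e and f ⊞ e = (can + id_A) ∘ (id_{HX} + f) ∘ [e, inr] with can = [H inl, H inr] : HX + HY → H(X+Y). -/
open CategoryTheory Limits

universe u v

variable {C : Type u} [Category.{v} C] [HasBinaryCoproducts C]

/-- `s` is a solution of the flat equation morphism `e : X ⟶ HX + A`. -/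
def IsSolution (H : C ⥤ C) {A X : C} (α : H.obj A ⟶ A) (e : X ⟶ H.obj X ⨿ A) (s : X ⟶ A) : Prop :=
  s = e ≫ coprod.map (H.map s) (𝟙 A) ≫ coprod.desc α (𝟙 A)

/-- `h ▹ e = (id_{HX} + h) ∘ e` : renaming of parameters. -/
noncomputable def afterEq (H : C ⥤ C) {X Y Z : C} (e : X ⟶ H.obj X ⨿ Y) (h : Y ⟶ Z) :
    X ⟶ H.obj X ⨿ Z :=
  e ≫ coprod.map (𝟙 (H.obj X)) h

/-- `f ⊞ e = (can + id_A) ∘ (id_{HX} + f) ∘ [e, inr]`, with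
`can = [H inl, H inr] : HX + HY ⟶ H(X+Y)`. -/
noncomputable def plusEq (H : C ⥤ C) {X Y A : C} (e : X ⟶ H.obj X ⨿ Y) (f : Y ⟶ H.obj Y ⨿ A) :
    X ⨿ Y ⟶ H.obj (X ⨿ Y) ⨿ A :=
  coprod.desc e coprod.inr ≫
    coprod.map (𝟙 (H.obj X)) f ≫
      (coprod.associator (H.obj X) (H.obj Y) A).inv ≫
        coprod.map (coprod.desc (H.map coprod.inl) (H.map coprod.inr)) (𝟙 A)

/-
Restricting a solution `s` of `f ⊞ e` along the two injections gives a solution `inr ≫ s` of `f`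
and a solution `inl ≫ s` of `(inr ≫ s) ▹ e`. Uniqueness of solutions then identifies `f†` with
`inr ≫ s` and hence `(f† ▹ e)†` with `inl ≫ s`.
-/

attribute [local simp] coprod.inl_desc coprod.inr_desc coprod.inl_desc_assoc coprod.inr_desc_assoc

theorem coprod.associator_inv_comp_map_desc {P Q R Z : C} (g : P ⟶ Z) (k : Q ⟶ Z) :
    (coprod.associator P Q R).inv ≫ coprod.map (coprod.desc g k) (𝟙 R) =
      coprod.desc (g ≫ coprod.inl) (coprod.map k (𝟙 R)) := by
  ext <;> simp [coprod.associator_inv]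

variable {H : C ⥤ C} {A : C} {α : H.obj A ⟶ A}

theorem isSolution_iff {X : C} (e : X ⟶ H.obj X ⨿ A) (s : X ⟶ A) :
    IsSolution H α e s ↔ s = e ≫ coprod.desc (H.map s ≫ α) (𝟙 A) := by
  simp [IsSolution]

section plusEq

variable {X Y : C} (e : X ⟶ H.obj X ⨿ Y) (f : Y ⟶ H.obj Y ⨿ A)

theorem plusEq_eq_desc :
    plusEq H e f =
      coprod.desc (e ≫ coprod.desc (H.map coprod.inl ≫ coprod.inl) (coprod.inr ≫ plusEq H e f))
        (f ≫ coprod.map (H.map coprod.inr) (𝟙 A)) := by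
  rw [plusEq, coprod.associator_inv_comp_map_desc]
  ext <;> simp

variable {e f} {s : X ⨿ Y ⟶ A}

theorem IsSolution.inr_comp_of_plusEq (hs : IsSolution H α (plusEq H e f) s) :
    IsSolution H α f (coprod.inr ≫ s) := by
  rw [isSolution_iff] at hs ⊢
  conv_lhs => rw [hs, plusEq_eq_desc]
  simp

theorem IsSolution.inl_comp_of_plusEq (hs : IsSolution H α (plusEq H e f) s) :
    IsSolution H α (afterEq H e (coprod.inr ≫ s)) (coprod.inl ≫ s) := by
  rw [isSolution_iff] at hs ⊢
  conv_lhs => rw [hs, plusEq_eq_desc]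
  simp only [afterEq, coprod.desc_comp, coprod.map_desc, coprod.inl_desc, Category.assoc,
    Category.id_comp, Category.comp_id, Functor.map_comp]
  rw [← hs]

end plusEq

/-- In a completely iterative algebra, the assignment of unique solutions is compositional:
`(f† ▹ e)† = (f ⊞ e)† ∘ inl`. -/
theorem cia_solution_compositional
    (H : C ⥤ C) {A : C} (α : H.obj A ⟶ A)
    (cia : ∀ (X : C) (e : X ⟶ H.obj X ⨿ A), ∃! s : X ⟶ A, IsSolution H α e s)
    {X Y : C} (e : X ⟶ H.obj X ⨿ Y) (f : Y ⟶ H.obj Y ⨿ A)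
    (fs : Y ⟶ A) (hfs : IsSolution H α f fs)
    (s₁ : X ⟶ A) (hs₁ : IsSolution H α (afterEq H e fs) s₁)
    (s₂ : X ⨿ Y ⟶ A) (hs₂ : IsSolution H α (plusEq H e f) s₂) :
    s₁ = coprod.inl ≫ s₂ := by
  obtain rfl : fs = coprod.inr ≫ s₂ := (cia Y f).unique hfs hs₂.inr_comp_of_plusEq
  exact (cia X _).unique hs₁ hs₂.inl_comp_of_plusEq
end

section
/- Let H : CMS → CMS be a contracting endofunctor of the category of complete metric spaces (with metrics bounded by 1) and nonexpanding maps, i.e., there is ε < 1 with d(Hf, Hg) ≤ ε · d(f, g) for all parallel pairs f, g in the sup metric. Then every nonempty H-algebra α : HA → A is a completely iterative algebra: every flat equation morphism e : X → HX + A has a unique solution. -/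
open scoped NNReal

/-- An object of the category `CMS` of complete metric spaces with metrics
bounded by `1`, and nonexpanding maps. -/
structure CMSObj : Type 1 where
  carrier : Type
  [metric : MetricSpace carrier]
  [complete : CompleteSpace carrier]
  bounded : ∀ x y : carrier, dist x y ≤ 1

attribute [instance] CMSObj.metric CMSObj.complete

instance : CoeSort CMSObj Type := ⟨CMSObj.carrier⟩

/-- A morphism of `CMS`: a nonexpanding (`1`-Lipschitz) map. -/
def CMSHom (X Y : CMSObj) : Type := {f : X.carrier → Y.carrier // LipschitzWith 1 f}

/-- Identity morphism of `CMS`. -/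
def CMSHom.id (X : CMSObj) : CMSHom X X := ⟨fun x => x, LipschitzWith.id⟩

/-- Composition of morphisms of `CMS`. -/
def CMSHom.comp {X Y Z : CMSObj} (g : CMSHom Y Z) (f : CMSHom X Y) : CMSHom X Z :=
  ⟨g.1 ∘ f.1, by simpa using g.2.comp f.2⟩

/-- The sup (pointwise) metric on the hom-set `CMS(X, Y)`:
`d(f, g) = sup_x d(f x, g x)`. -/
noncomputable def homDist {X Y : CMSObj} (f g : CMSHom X Y) : ℝ :=
  ⨆ x : X.carrier, dist (f.1 x) (g.1 x)

/-- The carrier of the coproduct `X + Y` in `CMS` (a type synonym for the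
disjoint union). -/
def SumCarrier (X Y : CMSObj) : Type := X.carrier ⊕ Y.carrier

/-- The distance on the coproduct `X + Y` in `CMS`: within each summand the
given distances, across the summands the distance is `1`. -/
def sumDist (X Y : CMSObj) : SumCarrier X Y → SumCarrier X Y → ℝ
  | .inl a, .inl b => dist a b
  | .inr a, .inr b => dist a b
  | _, _ => 1

/-- The metric of the coproduct `X + Y` in `CMS`. -/
noncomputable def sumMetric (X Y : CMSObj) : MetricSpace (SumCarrier X Y) where
  dist := sumDist X Y
  dist_self := by rintro (a | a) <;> simp [sumDist]
  dist_comm := by rintro (a | a) (b | b) <;> simp [sumDist, dist_comm]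
  dist_triangle := by
    rintro (a | a) (b | b) (c | c) <;> simp only [sumDist]
    · exact dist_triangle a b c
    · linarith [dist_nonneg (x := a) (y := b)]
    · linarith [X.bounded a c]
    · linarith [dist_nonneg (x := b) (y := c)]
    · linarith [dist_nonneg (x := b) (y := c)]
    · linarith [Y.bounded a c]
    · linarith [dist_nonneg (x := a) (y := b)]
    · exact dist_triangle a b c
  eq_of_dist_eq_zero := by
    rintro (a | a) (b | b) h
    · simp only [sumDist] at h; exact congrArg Sum.inl (eq_of_dist_eq_zero h)
    · simp only [sumDist] at h; norm_num at h
    · simp only [sumDist] at h; norm_num at h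
    · simp only [sumDist] at h; exact congrArg Sum.inr (eq_of_dist_eq_zero h)

/-- Coproduct injections of `CMS`, as functions. -/
def sumInl (X Y : CMSObj) : X.carrier → SumCarrier X Y := Sum.inl

/-- Coproduct injections of `CMS`, as functions. -/
def sumInr (X Y : CMSObj) : Y.carrier → SumCarrier X Y := Sum.inr

theorem sumComplete (X Y : CMSObj) :
    @CompleteSpace _ (sumMetric X Y).toUniformSpace := by
  letI : MetricSpace (SumCarrier X Y) := sumMetric X Y
  have hisoL : Isometry (sumInl X Y) :=
    Isometry.of_dist_eq fun a b => rfl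
  have hisoR : Isometry (sumInr X Y) :=
    Isometry.of_dist_eq fun a b => rfl
  have hL : IsComplete (Set.range (sumInl X Y)) :=
    hisoL.isUniformInducing.isComplete_range
  have hR : IsComplete (Set.range (sumInr X Y)) :=
    hisoR.isUniformInducing.isComplete_range
  refine completeSpace_iff_isComplete_univ.mpr ?_
  have hu : (Set.range (sumInl X Y) ∪ Set.range (sumInr X Y)) = Set.univ := by
    ext z
    simp only [Set.mem_union, Set.mem_range, Set.mem_univ, iff_true]
    cases z with
    | inl a => exact Or.inl ⟨a, rfl⟩
    | inr b => exact Or.inr ⟨b, rfl⟩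
  rw [← hu]
  exact hL.union hR

/-- The coproduct `X + Y` in `CMS`. -/
noncomputable def CMSObj.sum (X Y : CMSObj) : CMSObj where
  carrier := SumCarrier X Y
  metric := sumMetric X Y
  complete := sumComplete X Y
  bounded := by
    rintro (a | a) (b | b)
    · exact X.bounded a b
    · exact le_refl 1
    · exact le_refl 1
    · exact Y.bounded a b

/-- An endofunctor of the category `CMS`. -/
structure CMSFunctor : Type 1 where
  obj : CMSObj → CMSObj
  map : ∀ {X Y : CMSObj}, CMSHom X Y → CMSHom (obj X) (obj Y)
  map_id : ∀ X : CMSObj, map (CMSHom.id X) = CMSHom.id (obj X)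
  map_comp : ∀ {X Y Z : CMSObj} (f : CMSHom X Y) (g : CMSHom Y Z),
    map (g.comp f) = (map g).comp (map f)

/-- `H` is `ε`-contracting: `d(Hf, Hg) ≤ ε·d(f, g)` in the sup metric, for all
parallel pairs `f, g`. -/
def CMSFunctor.Contracting (H : CMSFunctor) (ε : ℝ) : Prop :=
  ∀ (X Y : CMSObj) (f g : CMSHom X Y), homDist (H.map f) (H.map g) ≤ ε * homDist f g

/-- `s` is a solution of the flat equation morphism `e : X ⟶ HX + A` in the
`H`-algebra `(A, α)`: `s = [α, id] ∘ (Hs + id) ∘ e`. -/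
def CMSSol (H : CMSFunctor) {A : CMSObj} (α : CMSHom (H.obj A) A) {X : CMSObj}
    (e : CMSHom X (CMSObj.sum (H.obj X) A)) (s : CMSHom X A) : Prop :=
  ∀ x, s.1 x = Sum.elim (fun h => α.1 ((H.map s).1 h)) (fun a => a) (e.1 x)

/-! Solutions of `e` are the fixed points of `s ↦ [α, id] ∘ (Hs + id) ∘ e` on `CMS(X, A)`, and this
map is `ε`-contracting for the sup metric because `H` is. The sup metric makes `CMS(X, A)` a closed
subspace of the bounded continuous functions `X →ᵇ A`, hence complete, and it is nonempty since `A`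
is; Banach's fixed point theorem gives the unique solution. -/

namespace CMSHom

variable {X Y Z : CMSObj}

@[ext]
theorem ext {f g : CMSHom X Y} (h : ∀ x, f.1 x = g.1 x) : f = g :=
  Subtype.ext (funext h)

theorem dist_apply_le_homDist (f g : CMSHom X Y) (x : X) : dist (f.1 x) (g.1 x) ≤ homDist f g :=
  le_ciSup (f := fun x => dist (f.1 x) (g.1 x)) ⟨1, by rintro r ⟨x, rfl⟩; exact Y.bounded _ _⟩ x

theorem homDist_nonneg (f g : CMSHom X Y) : 0 ≤ homDist f g :=
  Real.iSup_nonneg fun _ => dist_nonneg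

theorem homDist_le {f g : CMSHom X Y} {c : ℝ} (hc : 0 ≤ c) (h : ∀ x, dist (f.1 x) (g.1 x) ≤ c) :
    homDist f g ≤ c :=
  Real.iSup_le h hc

theorem homDist_comp_left_le (h : CMSHom Y Z) (f g : CMSHom X Y) :
    homDist (h.comp f) (h.comp g) ≤ homDist f g :=
  homDist_le (homDist_nonneg f g) fun x =>
    (h.2.dist_le_mul _ _).trans (by simpa using dist_apply_le_homDist f g x)

theorem homDist_comp_right_le (f g : CMSHom Y Z) (e : CMSHom X Y) :
    homDist (f.comp e) (g.comp e) ≤ homDist f g :=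
  homDist_le (homDist_nonneg f g) fun x => dist_apply_le_homDist f g (e.1 x)

/-- Nonexpanding because the summands of `X + Y` lie at distance `1` and the metric of `Z` is
bounded by `1`. -/
def sumElim (f : CMSHom X Z) (g : CMSHom Y Z) : CMSHom (X.sum Y) Z :=
  ⟨Sum.elim f.1 g.1, LipschitzWith.of_dist_le_mul <| by
    rintro (a | a) (b | b)
    · exact f.2.dist_le_mul a b
    · show dist (f.1 a) (g.1 b) ≤ ((1 : ℝ≥0) : ℝ) * 1
      simpa using Z.bounded _ _
    · show dist (g.1 a) (f.1 b) ≤ ((1 : ℝ≥0) : ℝ) * 1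
      simpa using Z.bounded _ _
    · exact g.2.dist_le_mul a b⟩

theorem homDist_sumElim_left_le (f f' : CMSHom X Z) (g : CMSHom Y Z) :
    homDist (sumElim f g) (sumElim f' g) ≤ homDist f f' :=
  homDist_le (homDist_nonneg f f') <| by
    rintro (a | b)
    · exact dist_apply_le_homDist f f' a
    · simpa [sumElim] using homDist_nonneg f f'

def toBCF (f : CMSHom X Y) : BoundedContinuousFunction X Y :=
  ⟨⟨f.1, f.2.continuous⟩, 1, fun _ _ => Y.bounded _ _⟩

theorem toBCF_injective : Function.Injective (toBCF (X := X) (Y := Y)) :=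
  fun _ _ h => ext fun x => DFunLike.congr_fun h x

noncomputable instance : MetricSpace (CMSHom X Y) :=
  MetricSpace.induced toBCF toBCF_injective inferInstance

theorem dist_eq_homDist (f g : CMSHom X Y) : dist f g = homDist f g :=
  BoundedContinuousFunction.dist_eq_iSup (f := toBCF f) (g := toBCF g)

theorem range_toBCF :
    Set.range (toBCF (X := X) (Y := Y)) = {f : BoundedContinuousFunction X Y | LipschitzWith 1 ⇑f} :=
  Set.ext fun f => ⟨by rintro ⟨g, rfl⟩; exact g.2, fun hf => ⟨⟨f, hf⟩, rfl⟩⟩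

theorem isometry_toBCF : Isometry (toBCF (X := X) (Y := Y)) :=
  Isometry.of_dist_eq fun _ _ => rfl

instance : CompleteSpace (CMSHom X Y) := by
  have hclosed : IsClosed {f : BoundedContinuousFunction X Y | LipschitzWith 1 ⇑f} :=
    (isClosed_setOfPred_lipschitzWith (α := X) (β := Y) 1).preimage
      BoundedContinuousFunction.continuous_coe
  rw [← range_toBCF] at hclosed
  exact isometry_toBCF.isUniformInducing.completeSpace hclosed.isComplete

instance [Nonempty Y] : Nonempty (CMSHom X Y) :=
  ⟨⟨fun _ => Classical.arbitrary Y, LipschitzWith.const' _⟩⟩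

end CMSHom

section Solutions

variable (H : CMSFunctor) {A : CMSObj} (α : CMSHom (H.obj A) A) {X : CMSObj}
  (e : CMSHom X (CMSObj.sum (H.obj X) A))

noncomputable def solutionStep (s : CMSHom X A) : CMSHom X A :=
  (CMSHom.sumElim (α.comp (H.map s)) (CMSHom.id A)).comp e

theorem cmsSol_iff_isFixedPt (s : CMSHom X A) :
    CMSSol H α e s ↔ Function.IsFixedPt (solutionStep H α e) s := by
  rw [Function.IsFixedPt, CMSHom.ext_iff]
  exact forall_congr' fun _ => eq_comm

variable {H} {ε : ℝ}

theorem homDist_solutionStep_le (hcontr : H.Contracting ε) (s t : CMSHom X A) :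
    homDist (solutionStep H α e s) (solutionStep H α e t) ≤ ε * homDist s t :=
  calc homDist (solutionStep H α e s) (solutionStep H α e t)
      ≤ homDist (α.comp (H.map s)) (α.comp (H.map t)) :=
        (CMSHom.homDist_comp_right_le _ _ e).trans (CMSHom.homDist_sumElim_left_le _ _ _)
    _ ≤ homDist (H.map s) (H.map t) := CMSHom.homDist_comp_left_le α _ _
    _ ≤ ε * homDist s t := hcontr _ _ _ _

theorem contractingWith_solutionStep (hε : ε < 1) (hcontr : H.Contracting ε) :
    ContractingWith ε.toNNReal (solutionStep H α e) := by
  refine ⟨by simpa using hε, LipschitzWith.of_dist_le_mul fun s t => ?_⟩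
  simp only [CMSHom.dist_eq_homDist]
  exact (homDist_solutionStep_le α e hcontr s t).trans
    (mul_le_mul_of_nonneg_right (Real.le_coe_toNNReal ε) (CMSHom.homDist_nonneg s t))

end Solutions

/-- Let `H : CMS → CMS` be a contracting endofunctor of the category of
complete metric spaces (with metrics bounded by `1`) and nonexpanding maps.
Then every nonempty `H`-algebra `α : HA → A` is a completely iterative algebra:
every flat equation morphism `e : X → HX + A` has a unique solution. -/
theorem cms_contracting_algebra_cia (H : CMSFunctor) (ε : ℝ) (hε : ε < 1)
    (hcontr : H.Contracting ε)
    (A : CMSObj) (hA : Nonempty A.carrier) (α : CMSHom (H.obj A) A) :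
    ∀ (X : CMSObj) (e : CMSHom X (CMSObj.sum (H.obj X) A)),
      ∃! s : CMSHom X A, CMSSol H α e s := by
  intro X e
  have hstep := contractingWith_solutionStep α e hε hcontr
  refine ⟨ContractingWith.fixedPoint _ hstep, ?_, fun s hs => ?_⟩
  · exact (cmsSol_iff_isFixedPt H α e _).mpr hstep.fixedPoint_isFixedPt
  · exact hstep.fixedPoint_unique ((cmsSol_iff_isFixedPt H α e s).mp hs)
end

section
/- Let H : CPO → CPO be a locally continuous endofunctor of the category of ω-complete partial orders and continuous maps, and let α : HA → A be an H-algebra whose carrier has a least element ⊥. Then every flat equation morphism e : X → HX + A has a least solution e†, given as the least fixed point of the continuous map F(s) = [α, id] ∘ (Hs + id) ∘ e on CPO(X, A); equivalently e† = ⊔_{n<ω} e†_n where e†₀ is constantly ⊥ and e†_{n+1} = F(e†_n). -/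
open OmegaCompletePartialOrder

namespace CPOSum

variable {α β : Type} [OmegaCompletePartialOrder α] [OmegaCompletePartialOrder β]

theorem exists_inl (c : Chain (α ⊕ β)) (a₀ : α) (h : c 0 = Sum.inl a₀) (n : ℕ) :
    ∃ a, c n = Sum.inl a := by
  have h0 : c 0 ≤ c n := c.monotone (Nat.zero_le n)
  rw [h] at h0
  cases hn : c n with
  | inl a => exact ⟨a, rfl⟩
  | inr b => rw [hn] at h0; exact absurd h0 Sum.not_inl_le_inr

theorem exists_inr (c : Chain (α ⊕ β)) (b₀ : β) (h : c 0 = Sum.inr b₀) (n : ℕ) :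
    ∃ b, c n = Sum.inr b := by
  have h0 : c 0 ≤ c n := c.monotone (Nat.zero_le n)
  rw [h] at h0
  cases hn : c n with
  | inl a => rw [hn] at h0; exact absurd h0 Sum.not_inr_le_inl
  | inr b => exact ⟨b, rfl⟩

/-- The left component of a chain in `α ⊕ β` starting in `α`. -/
def leftChain (c : Chain (α ⊕ β)) (a₀ : α) (h : c 0 = Sum.inl a₀) : Chain α where
  toFun n := ((c n).getLeft?).getD a₀
  monotone' := by
    intro m n hmn
    obtain ⟨a, ha⟩ := exists_inl c a₀ h m
    obtain ⟨b, hb⟩ := exists_inl c a₀ h n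
    have hc : c m ≤ c n := c.monotone hmn
    rw [ha, hb] at hc
    simp [ha, hb, Sum.getLeft?]
    exact Sum.inl_le_inl_iff.mp hc

/-- The right component of a chain in `α ⊕ β` starting in `β`. -/
def rightChain (c : Chain (α ⊕ β)) (b₀ : β) (h : c 0 = Sum.inr b₀) : Chain β where
  toFun n := ((c n).getRight?).getD b₀
  monotone' := by
    intro m n hmn
    obtain ⟨a, ha⟩ := exists_inr c b₀ h m
    obtain ⟨b, hb⟩ := exists_inr c b₀ h n
    have hc : c m ≤ c n := c.monotone hmn
    rw [ha, hb] at hc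
    simp [ha, hb, Sum.getRight?]
    exact Sum.inr_le_inr_iff.mp hc

theorem leftChain_apply (c : Chain (α ⊕ β)) (a₀ : α) (h : c 0 = Sum.inl a₀)
    {i : ℕ} {a : α} (ha : c i = Sum.inl a) : leftChain c a₀ h i = a := by
  show ((c i).getLeft?).getD a₀ = a
  rw [ha]
  rfl

theorem rightChain_apply (c : Chain (α ⊕ β)) (b₀ : β) (h : c 0 = Sum.inr b₀)
    {i : ℕ} {b : β} (hb : c i = Sum.inr b) : rightChain c b₀ h i = b := by
  show ((c i).getRight?).getD b₀ = b
  rw [hb]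
  rfl

/-- The `ω`-complete partial order on the disjoint union `α ⊕ β`, with elements
of different summands incomparable (the coproduct in `CPO`): an `ω`-chain lies
entirely in one summand, and its supremum is computed there. -/
noncomputable instance instSumCPO : OmegaCompletePartialOrder (α ⊕ β) where
  ωSup c :=
    match h : c 0 with
    | Sum.inl a₀ => Sum.inl (ωSup (leftChain c a₀ h))
    | Sum.inr b₀ => Sum.inr (ωSup (rightChain c b₀ h))
  le_ωSup := by
    intro c i
    split
    · rename_i a₀ h
      obtain ⟨a, ha⟩ := exists_inl c a₀ h i
      have hle := le_ωSup (leftChain c a₀ h) i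
      rw [leftChain_apply c a₀ h ha] at hle
      rw [ha]
      exact Sum.inl_le_inl_iff.mpr hle
    · rename_i b₀ h
      obtain ⟨b, hb⟩ := exists_inr c b₀ h i
      have hle := le_ωSup (rightChain c b₀ h) i
      rw [rightChain_apply c b₀ h hb] at hle
      rw [hb]
      exact Sum.inr_le_inr_iff.mpr hle
  ωSup_le := by
    intro c x hx
    split
    · rename_i a₀ h
      rcases x with ax | bx
      · refine Sum.inl_le_inl_iff.mpr (ωSup_le _ _ ?_)
        intro i
        obtain ⟨a, ha⟩ := exists_inl c a₀ h i
        have hi := hx i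
        rw [ha] at hi
        rw [leftChain_apply c a₀ h ha]
        exact Sum.inl_le_inl_iff.mp hi
      · have h0 := hx 0
        rw [h] at h0
        exact absurd h0 Sum.not_inl_le_inr
    · rename_i b₀ h
      rcases x with ax | bx
      · have h0 := hx 0
        rw [h] at h0
        exact absurd h0 Sum.not_inr_le_inl
      · refine Sum.inr_le_inr_iff.mpr (ωSup_le _ _ ?_)
        intro i
        obtain ⟨b, hb⟩ := exists_inr c b₀ h i
        have hi := hx i
        rw [hb] at hi
        rw [rightChain_apply c b₀ h hb]
        exact Sum.inr_le_inr_iff.mp hi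

theorem ωSup_eq_inl (c : Chain (α ⊕ β)) (a₀ : α) (h : c 0 = Sum.inl a₀) :
    ωSup c = Sum.inl (ωSup (leftChain c a₀ h)) := by
  show (match h' : c 0 with
    | Sum.inl a₀ => Sum.inl (ωSup (leftChain c a₀ h'))
    | Sum.inr b₀ => Sum.inr (ωSup (rightChain c b₀ h'))) = _
  split
  · rename_i a₁ h₁
    have ha : a₁ = a₀ := by
      have := h₁.symm.trans h
      exact Sum.inl_injective this
    subst ha
    rfl
  · rename_i b₁ h₁
    have := h₁.symm.trans h
    simp at this

theorem ωSup_eq_inr (c : Chain (α ⊕ β)) (b₀ : β) (h : c 0 = Sum.inr b₀) :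
    ωSup c = Sum.inr (ωSup (rightChain c b₀ h)) := by
  show (match h' : c 0 with
    | Sum.inl a₀ => Sum.inl (ωSup (leftChain c a₀ h'))
    | Sum.inr b₀ => Sum.inr (ωSup (rightChain c b₀ h'))) = _
  split
  · rename_i a₁ h₁
    have := h₁.symm.trans h
    simp at this
  · rename_i b₁ h₁
    have hb : b₁ = b₀ := by
      have := h₁.symm.trans h
      exact Sum.inr_injective this
    subst hb
    rfl

end CPOSum

/-- An object of the category `CPO` of `ω`-complete partial orders
(posets with joins of increasing `ω`-chains) and continuous maps. -/
structure CPOCat : Type 1 where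
  carrier : Type
  [str : OmegaCompletePartialOrder carrier]

attribute [instance] CPOCat.str

instance : CoeSort CPOCat Type := ⟨CPOCat.carrier⟩

/-- A cpo `A` as an object of `CPO`. -/
def CPOCat.of (A : Type) [OmegaCompletePartialOrder A] : CPOCat := ⟨A⟩

/-- The binary coproduct in `CPO`: the disjoint union with elements of
different summands incomparable. -/
@[reducible] noncomputable def CPOCat.sum (X Y : CPOCat) : CPOCat := ⟨X.carrier ⊕ Y.carrier⟩

/-- Coproduct injection `inl` as a continuous map. -/
noncomputable def cpoInl {X Y : CPOCat} : X →𝒄 CPOCat.sum X Y where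
  toFun := Sum.inl
  monotone' := Sum.inl_mono
  map_ωSup' := by
    intro c
    rw [CPOSum.ωSup_eq_inl (α := X.carrier) (β := Y.carrier) (c.map (⟨Sum.inl, Sum.inl_mono⟩ : X.carrier →o X.carrier ⊕ Y.carrier)) (c 0) rfl]
    have hch : CPOSum.leftChain (c.map (⟨Sum.inl, Sum.inl_mono⟩ : X.carrier →o X.carrier ⊕ Y.carrier)) (c 0) rfl = c := by
      apply Chain.ext
      funext n
      exact CPOSum.leftChain_apply _ (c 0) rfl (i := n) (a := c n) rfl
    rw [hch]

/-- Coproduct injection `inr` as a continuous map. -/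
noncomputable def cpoInr {X Y : CPOCat} : Y →𝒄 CPOCat.sum X Y where
  toFun := Sum.inr
  monotone' := Sum.inr_mono
  map_ωSup' := by
    intro c
    rw [CPOSum.ωSup_eq_inr (α := X.carrier) (β := Y.carrier) (c.map (⟨Sum.inr, Sum.inr_mono⟩ : Y.carrier →o X.carrier ⊕ Y.carrier)) (c 0) rfl]
    have hch : CPOSum.rightChain (c.map (⟨Sum.inr, Sum.inr_mono⟩ : Y.carrier →o X.carrier ⊕ Y.carrier)) (c 0) rfl = c := by
      apply Chain.ext
      funext n
      exact CPOSum.rightChain_apply _ (c 0) rfl (i := n) (b := c n) rfl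
    rw [hch]

/-- Copairing `[f, g]` of continuous maps, as a continuous map on the coproduct. -/
noncomputable def cpoElim {X Y Z : CPOCat} (f : X →𝒄 Z) (g : Y →𝒄 Z) :
    CPOCat.sum X Y →𝒄 Z where
  toFun := Sum.elim f g
  monotone' := by
    rintro (x | x) (y | y) h
    · exact f.monotone (Sum.inl_le_inl_iff.mp h)
    · exact absurd h Sum.not_inl_le_inr
    · exact absurd h Sum.not_inr_le_inl
    · exact g.monotone (Sum.inr_le_inr_iff.mp h)
  map_ωSup' := by
    intro c
    rcases h : c 0 with a₀ | b₀
    · rw [CPOSum.ωSup_eq_inl c a₀ h]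
      show f (ωSup (CPOSum.leftChain c a₀ h)) = _
      rw [f.continuous]
      apply congrArg
      apply Chain.ext
      funext n
      obtain ⟨a, ha⟩ := CPOSum.exists_inl c a₀ h n
      show f (CPOSum.leftChain c a₀ h n) = Sum.elim f g (c n)
      rw [CPOSum.leftChain_apply c a₀ h ha, ha]
      rfl
    · rw [CPOSum.ωSup_eq_inr c b₀ h]
      show g (ωSup (CPOSum.rightChain c b₀ h)) = _
      rw [g.continuous]
      apply congrArg
      apply Chain.ext
      funext n
      obtain ⟨b, hb⟩ := CPOSum.exists_inr c b₀ h n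
      show g (CPOSum.rightChain c b₀ h n) = Sum.elim f g (c n)
      rw [CPOSum.rightChain_apply c b₀ h hb, hb]
      rfl

/-- `f + g` on coproducts, as a continuous map. -/
noncomputable def cpoSumMap {X X' Y Y' : CPOCat} (f : X →𝒄 X') (g : Y →𝒄 Y') :
    CPOCat.sum X Y →𝒄 CPOCat.sum X' Y' :=
  cpoElim (cpoInl.comp f) (cpoInr.comp g)

open OmegaCompletePartialOrder.ContinuousHom in
/-- A locally continuous endofunctor of `CPO`: the action on hom-cpos
`CPO(X, Y) → CPO(HX, HY)` is continuous (monotone and preserving suprema of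
`ω`-chains of continuous maps). -/
structure CPOFunctor : Type 1 where
  obj : CPOCat → CPOCat
  map : ∀ {X Y : CPOCat}, (X →𝒄 Y) → (obj X →𝒄 obj Y)
  map_id : ∀ X : CPOCat, map (ContinuousHom.id : X →𝒄 X) = ContinuousHom.id
  map_comp : ∀ {X Y Z : CPOCat} (f : X →𝒄 Y) (g : Y →𝒄 Z),
    map (g.comp f) = (map g).comp (map f)
  mono : ∀ {X Y : CPOCat} (f g : X →𝒄 Y), f ≤ g → map f ≤ map g
  cont : ∀ {X Y : CPOCat} (c : Chain (X →𝒄 Y)),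
    map (ωSup c) = ωSup (c.map ⟨fun f => map f, fun _ _ h => mono _ _ h⟩)

/-- `s` is a solution of the flat equation morphism `e : X →𝒄 HX + A`:
`s = [α, id] ∘ (Hs + id) ∘ e`. -/
noncomputable def CPOSol (H : CPOFunctor) {A : Type} [OmegaCompletePartialOrder A]
    (α : H.obj (CPOCat.of A) →𝒄 CPOCat.of A) {X : CPOCat}
    (e : X →𝒄 CPOCat.sum (H.obj X) (CPOCat.of A)) (s : X →𝒄 CPOCat.of A) : Prop :=
  s = (cpoElim (α.comp (H.map s)) ContinuousHom.id).comp e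

/-- The map `F : s ↦ [α, id] ∘ (Hs + id) ∘ e` on `CPO(X, A)`. -/
noncomputable def cpoEqFun (H : CPOFunctor) {A : Type} [OmegaCompletePartialOrder A]
    (α : H.obj (CPOCat.of A) →𝒄 CPOCat.of A) {X : CPOCat}
    (e : X →𝒄 CPOCat.sum (H.obj X) (CPOCat.of A)) (s : X →𝒄 CPOCat.of A) :
    X →𝒄 CPOCat.of A :=
  (cpoElim (α.comp (H.map s)) ContinuousHom.id).comp e

/-- The approximations `e†₀ = const ⊥`, `e†_{n+1} = F (e†_n)`. -/
noncomputable def cpoIter (H : CPOFunctor) {A : Type} [OmegaCompletePartialOrder A]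
    [OrderBot A] (α : H.obj (CPOCat.of A) →𝒄 CPOCat.of A) {X : CPOCat}
    (e : X →𝒄 CPOCat.sum (H.obj X) (CPOCat.of A)) : ℕ → (X →𝒄 CPOCat.of A)
  | 0 => ContinuousHom.const (⊥ : A)
  | n + 1 => cpoEqFun H α e (cpoIter H α e n)

/-!
On `CPO(X, A)` the map `F s = [α, id] ∘ (Hs + id) ∘ e` is monotone and `ω`-continuous: at a point
`x` with `e x = inl y` this is local continuity of `H` followed by continuity of `α`, and where
`e x = inr a` every `F s` takes the value `a`. Kleene's fixed point theorem, started at the least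
map `const ⊥`, then makes `⊔ₙ Fⁿ (const ⊥)` the least fixed point of `F`.
-/

theorem OmegaCompletePartialOrder.fixedPoints.isLeast_ωSup_iterateChain {β : Type*}
    [OmegaCompletePartialOrder β] (f : β →𝒄 β) {x : β} (hx : ∀ a, x ≤ a) :
    IsLeast (Function.fixedPoints f) (ωSup (iterateChain f x (hx _))) :=
  ⟨ωSup_iterate_mem_fixedPoint f x _, fun _ ha => ωSup_iterate_le_fixedPoint f x _ ha (hx _)⟩

section EquationMap

variable (H : CPOFunctor) {A : Type} [OmegaCompletePartialOrder A]
  (α : H.obj (CPOCat.of A) →𝒄 CPOCat.of A) {X : CPOCat}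
  (e : X →𝒄 CPOCat.sum (H.obj X) (CPOCat.of A))

theorem cpoSol_iff (s : X →𝒄 CPOCat.of A) : CPOSol H α e s ↔ cpoEqFun H α e s = s := eq_comm

theorem cpoEqFun_apply (s : X →𝒄 CPOCat.of A) (x : X) :
    cpoEqFun H α e s x = Sum.elim (fun y => α (H.map s y)) id (e x) := rfl

theorem cpoEqFun_monotone : Monotone (cpoEqFun H α e) := by
  intro s t hst x
  change cpoEqFun H α e s x ≤ cpoEqFun H α e t x
  rw [cpoEqFun_apply, cpoEqFun_apply]
  rcases e x with y | a
  · exact α.monotone (H.mono s t hst y)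
  · exact le_rfl

theorem ωScottContinuous_cpoEqFun : ωScottContinuous (cpoEqFun H α e) := by
  refine ωScottContinuous.of_monotone_map_ωSup ⟨cpoEqFun_monotone H α e, fun c => ?_⟩
  ext x
  rw [cpoEqFun_apply]
  rcases he : e x with y | a
  · rw [Sum.elim_inl, H.cont]
    simp only [ContinuousHom.ωSup_def, ContinuousHom.ωSup_apply]
    rw [α.continuous]
    congr 1
    ext n
    change _ = cpoEqFun H α e (c n) x
    rw [cpoEqFun_apply, he]
    rfl
  · have hc (n : ℕ) : cpoEqFun H α e (c n) x = a := by rw [cpoEqFun_apply, he]; rfl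
    exact le_antisymm (le_ωSup_of_le 0 (hc 0).ge) (ωSup_le _ _ fun n => (hc n).le)

theorem cpoIter_eq_iterate [OrderBot A] (n : ℕ) :
    cpoIter H α e n = (cpoEqFun H α e)^[n] (ContinuousHom.const (⊥ : A)) := by
  induction n with
  | zero => rfl
  | succ n ih => rw [Function.iterate_succ_apply', ← ih]; rfl

end EquationMap

/-- Let `H : CPO → CPO` be locally continuous and `α : HA →𝒄 A` an `H`-algebra
whose carrier has a least element `⊥`.  Then every flat equation morphism
`e : X →𝒄 HX + A` has a least solution `e†`, which is also the least fixed
point of the continuous map `F(s) = [α, id] ∘ (Hs + id) ∘ e` on `CPO(X, A)`,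
and `e† = ⊔_{n<ω} e†_n` where `e†₀ = const ⊥` and `e†_{n+1} = F(e†_n)`. -/
theorem cpo_least_solution (H : CPOFunctor) (A : Type)
    [OmegaCompletePartialOrder A] [OrderBot A]
    (α : H.obj (CPOCat.of A) →𝒄 CPOCat.of A) :
    ∀ (X : CPOCat) (e : X →𝒄 CPOCat.sum (H.obj X) (CPOCat.of A)),
      ∃ s : X →𝒄 CPOCat.of A,
        IsLeast {t | CPOSol H α e t} s ∧
        IsLeast {t | cpoEqFun H α e t = t} s ∧
        ∃ ch : Chain (X →𝒄 CPOCat.of A),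
          (∀ n, ch n = cpoIter H α e n) ∧ s = ωSup ch := by
  intro X e
  let F := ContinuousHom.ofFun (cpoEqFun H α e) (ωScottContinuous_cpoEqFun H α e)
  let bot : X →𝒄 CPOCat.of A := ContinuousHom.const (⊥ : A)
  have hbot (t : X →𝒄 CPOCat.of A) : bot ≤ t := fun _ => @bot_le A _ _ _
  let ch := fixedPoints.iterateChain F bot (hbot _)
  have hlfp : IsLeast {t | cpoEqFun H α e t = t} (ωSup ch) :=
    fixedPoints.isLeast_ωSup_iterateChain F hbot
  refine ⟨ωSup ch, ?_, hlfp, ch, fun n => (cpoIter_eq_iterate H α e n).symm, rfl⟩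
  simpa only [cpoSol_iff] using hlfp
end

section
/- Let H : Pos → Pos be a locally order-preserving endofunctor of the category of posets and monotone maps, and let α : HA → A be an H-algebra whose carrier is a complete lattice. Then every flat equation morphism e : X → HX + A has a least solution, namely the least fixed point of the monotone map s ↦ [α, id] ∘ (Hs + id) ∘ e on the poset Pos(X, A), and this assignment makes A a complete Elgot algebra. -/
/-- An object of the category `Pos` of posets and monotone maps. -/
structure PosCat : Type 1 where
  carrier : Type
  [str : PartialOrder carrier]

attribute [instance] PosCat.str

instance : CoeSort PosCat Type := ⟨PosCat.carrier⟩

/-- The poset `A` as an object of `Pos`. -/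
def PosCat.of (A : Type) [PartialOrder A] : PosCat := ⟨A⟩

attribute [reducible] PosCat.of

/-- Binary coproduct in `Pos`: the disjoint union, elements of different
summands being incomparable. -/
def PosCat.sum (X Y : PosCat) : PosCat := ⟨X.carrier ⊕ Y.carrier⟩

/-- Coproduct injection `inl` as a monotone map. -/
def posInl {X Y : PosCat} : X →o PosCat.sum X Y :=
  ⟨Sum.inl, Sum.inl_mono⟩

/-- Coproduct injection `inr` as a monotone map. -/
def posInr {X Y : PosCat} : Y →o PosCat.sum X Y :=
  ⟨Sum.inr, Sum.inr_mono⟩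

/-- Copairing `[f, g]` of monotone maps, as a monotone map on the coproduct. -/
def posElim {X Y Z : PosCat} (f : X →o Z) (g : Y →o Z) : PosCat.sum X Y →o Z where
  toFun := Sum.elim f g
  monotone' := by
    rintro (x | x) (y | y) h
    · exact f.monotone (Sum.inl_le_inl_iff.mp h)
    · exact absurd h Sum.not_inl_le_inr
    · exact absurd h Sum.not_inr_le_inl
    · exact g.monotone (Sum.inr_le_inr_iff.mp h)

/-- `f + g` on coproducts, as a monotone map. -/
def posSumMap {X X' Y Y' : PosCat} (f : X →o X') (g : Y →o Y') :
    PosCat.sum X Y →o PosCat.sum X' Y' :=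
  posElim (posInl.comp f) (posInr.comp g)

/-- A locally order-preserving endofunctor of `Pos`: a functor on posets and
monotone maps such that `f ≤ g` implies `Hf ≤ Hg` (pointwise order on
hom-posets). -/
structure PosFunctor : Type 1 where
  obj : PosCat → PosCat
  map : ∀ {X Y : PosCat}, (X →o Y) → (obj X →o obj Y)
  map_id : ∀ X : PosCat, map (OrderHom.id : X →o X) = OrderHom.id
  map_comp : ∀ {X Y Z : PosCat} (f : X →o Y) (g : Y →o Z),
    map (g.comp f) = (map g).comp (map f)
  mono : ∀ {X Y : PosCat} (f g : X →o Y), f ≤ g → map f ≤ map g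

/-- `s` is a solution of the flat equation morphism `e : X →o HX + A`:
`s = [α, id] ∘ (Hs + id) ∘ e`. -/
def PosSol (H : PosFunctor) {A : Type} [PartialOrder A]
    (α : H.obj (PosCat.of A) →o PosCat.of A) {X : PosCat}
    (e : X →o PosCat.sum (H.obj X) (PosCat.of A)) (s : X →o PosCat.of A) : Prop :=
  s = (posElim (α.comp (H.map s)) OrderHom.id).comp e

/-- The monotone map `s ↦ [α, id] ∘ (Hs + id) ∘ e` on the poset `Pos(X, A)`. -/
def posEqMap (H : PosFunctor) {A : Type} [PartialOrder A]
    (α : H.obj (PosCat.of A) →o PosCat.of A) {X : PosCat}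
    (e : X →o PosCat.sum (H.obj X) (PosCat.of A)) :
    (X →o PosCat.of A) →o (X →o PosCat.of A) where
  toFun s := (posElim (α.comp (H.map s)) OrderHom.id).comp e
  monotone' := by
    intro s t hst x
    change Sum.elim (α.comp (H.map s)) OrderHom.id (e x) ≤ Sum.elim (α.comp (H.map t)) OrderHom.id (e x)
    rcases hxe : e x with h | a
    · exact α.monotone (H.mono _ _ hst h)
    · exact le_rfl

/-- The combined flat equation morphism `f ⊞ e` in `Pos`. -/
def posPlus (H : PosFunctor) {X Y : PosCat} {A : Type} [PartialOrder A]
    (e : X →o PosCat.sum (H.obj X) Y)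
    (f : Y →o PosCat.sum (H.obj Y) (PosCat.of A)) :
    PosCat.sum X Y →o PosCat.sum (H.obj (PosCat.sum X Y)) (PosCat.of A) :=
  let yPart : Y →o PosCat.sum (H.obj (PosCat.sum X Y)) (PosCat.of A) :=
    (posSumMap (H.map posInr) OrderHom.id).comp f
  posElim ((posElim (posInl.comp (H.map posInl)) yPart).comp e) yPart

/-- A complete Elgot algebra in `Pos`: chosen solutions of all flat equation
morphisms, satisfying functoriality and compositionality. -/
structure PosCompleteElgot (H : PosFunctor) (A : Type) [PartialOrder A]
    (α : H.obj (PosCat.of A) →o PosCat.of A) where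
  sol : ∀ (X : PosCat), (X →o PosCat.sum (H.obj X) (PosCat.of A)) → (X →o PosCat.of A)
  isSol : ∀ (X : PosCat) (e : X →o PosCat.sum (H.obj X) (PosCat.of A)),
    PosSol H α e (sol X e)
  functorial : ∀ (X Y : PosCat) (e : X →o PosCat.sum (H.obj X) (PosCat.of A))
    (f : Y →o PosCat.sum (H.obj Y) (PosCat.of A)) (h : X →o Y),
    (posSumMap (H.map h) OrderHom.id).comp e = f.comp h →
      sol X e = (sol Y f).comp h
  compositional : ∀ (X Y : PosCat) (e : X →o PosCat.sum (H.obj X) Y)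
    (f : Y →o PosCat.sum (H.obj Y) (PosCat.of A)),
    sol X ((posSumMap OrderHom.id (sol Y f)).comp e) =
      (sol (PosCat.sum X Y) (posPlus H e f)).comp posInl

/-! Least solutions are least fixed points, so both Elgot laws are instances of lfp fusion:
if a sup-preserving monotone `G` satisfies `G ∘ f = g ∘ G`, then `G (lfp f) = lfp g`.
Functoriality along `h : X → Y` is fusion with precomposition by `h`. For compositionality,
the least solution `w` of `e ⊞ f` restricts along `inr` to `f†` (functoriality), hence along
`inl` to a fixed point of the equation map of `(id + f†) ∘ e`; conversely `[((id + f†) ∘ e)†, f†]`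
is a fixed point of the equation map of `e ⊞ f`, which bounds `w` from above. -/

theorem OrderHom.map_lfp_of_semiconj {α β : Type*} [CompleteLattice α] [CompleteLattice β]
    {f : α →o α} {g : β →o β} (G : α →o β) (hG : ∀ s : Set α, G (sSup s) ≤ sSup (G '' s))
    (hfg : Function.Semiconj G f g) : G (lfp f) = lfp g := by
  refine le_antisymm (lfp_induction f (p := fun a => G a ≤ lfp g) ?_ ?_) (lfp_le _ ?_)
  · intro a ha _
    calc G (f a) = g (G a) := hfg a
      _ ≤ g (lfp g) := g.monotone ha
      _ = lfp g := map_lfp g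
  · intro s hs
    exact (hG s).trans (sSup_le (Set.forall_mem_image.mpr hs))
  · rw [← hfg, map_lfp]

section EquationMap

variable {H : PosFunctor} {A : Type} {X Y : PosCat}

theorem posHom_sum_ext {Z : PosCat} {u v : PosCat.sum X Y →o Z}
    (hl : u.comp posInl = v.comp posInl) (hr : u.comp posInr = v.comp posInr) : u = v := by
  ext (x | y)
  · exact DFunLike.congr_fun hl x
  · exact DFunLike.congr_fun hr y

variable [PartialOrder A] (α : H.obj (PosCat.of A) →o PosCat.of A)

theorem posEqMap_comp {e : X →o PosCat.sum (H.obj X) (PosCat.of A)}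
    {f : Y →o PosCat.sum (H.obj Y) (PosCat.of A)} {h : X →o Y}
    (hcomm : (posSumMap (H.map h) OrderHom.id).comp e = f.comp h) (s : Y →o PosCat.of A) :
    (posEqMap H α f s).comp h = posEqMap H α e (s.comp h) := by
  ext x
  have hx : f (h x) = posSumMap (H.map h) OrderHom.id (e x) := (DFunLike.congr_fun hcomm x).symm
  change Sum.elim (α.comp (H.map s)) OrderHom.id (f (h x)) =
    Sum.elim (α.comp (H.map (s.comp h))) OrderHom.id (e x)
  rw [hx, H.map_comp]
  rcases e x with r | a <;> rfl

theorem posPlus_comp_inr (e : X →o PosCat.sum (H.obj X) Y)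
    (f : Y →o PosCat.sum (H.obj Y) (PosCat.of A)) :
    (posSumMap (H.map posInr) OrderHom.id).comp f = (posPlus H e f).comp posInr :=
  rfl

theorem posEqMap_posPlus_comp_inl (e : X →o PosCat.sum (H.obj X) Y)
    (f : Y →o PosCat.sum (H.obj Y) (PosCat.of A)) (u : PosCat.sum X Y →o PosCat.of A) :
    (posEqMap H α (posPlus H e f) u).comp posInl =
      posEqMap H α ((posSumMap OrderHom.id (posEqMap H α f (u.comp posInr))).comp e)
        (u.comp posInl) := by
  ext x
  change Sum.elim (α.comp (H.map u)) OrderHom.id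
      (posElim (posInl.comp (H.map posInl)) ((posSumMap (H.map posInr) OrderHom.id).comp f)
        (e x)) =
    Sum.elim (α.comp (H.map (u.comp posInl))) OrderHom.id
      (posSumMap OrderHom.id (posEqMap H α f (u.comp posInr)) (e x))
  rcases e x with r | y
  · change α (H.map u (H.map posInl r)) = α (H.map (u.comp posInl) r)
    rw [H.map_comp]
    rfl
  · change Sum.elim (α.comp (H.map u)) OrderHom.id (posSumMap (H.map posInr) OrderHom.id (f y)) =
      Sum.elim (α.comp (H.map (u.comp posInr))) OrderHom.id (f y)
    rw [H.map_comp]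
    rcases f y with r | a <;> rfl

end EquationMap

section LeastSolution

open OrderHom

variable {H : PosFunctor} {A : Type} [CompleteLattice A] (α : H.obj (PosCat.of A) →o PosCat.of A)
  {X Y : PosCat}

theorem isLeast_lfp_posEqMap (e : X →o PosCat.sum (H.obj X) (PosCat.of A)) :
    IsLeast {s : X →o PosCat.of A | PosSol H α e s} (lfp (posEqMap H α e)) :=
  ⟨(map_lfp _).symm, fun _ hs => lfp_le _ hs.symm.le⟩

theorem lfp_posEqMap_eq_comp {e : X →o PosCat.sum (H.obj X) (PosCat.of A)}
    {f : Y →o PosCat.sum (H.obj Y) (PosCat.of A)} {h : X →o Y}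
    (hcomm : (posSumMap (H.map h) OrderHom.id).comp e = f.comp h) :
    lfp (posEqMap H α e) = (lfp (posEqMap H α f)).comp h := by
  let precomp : (Y →o PosCat.of A) →o (X →o PosCat.of A) :=
    ⟨fun s => s.comp h, fun _ _ hst x => hst (h x)⟩
  have hsSup (S : Set (Y →o PosCat.of A)) : precomp (sSup S) ≤ sSup (precomp '' S) := by
    intro x
    simp only [precomp, OrderHom.sSup_apply, iSup_image]
    rfl
  exact (map_lfp_of_semiconj precomp hsSup (posEqMap_comp α hcomm)).symm

theorem lfp_posEqMap_compositional (e : X →o PosCat.sum (H.obj X) Y)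
    (f : Y →o PosCat.sum (H.obj Y) (PosCat.of A)) :
    lfp (posEqMap H α ((posSumMap OrderHom.id (lfp (posEqMap H α f))).comp e)) =
      (lfp (posEqMap H α (posPlus H e f))).comp posInl := by
  set fSol := lfp (posEqMap H α f)
  set e' := (posSumMap OrderHom.id fSol).comp e
  set t := lfp (posEqMap H α e')
  set w := lfp (posEqMap H α (posPlus H e f))
  have hfSol : posEqMap H α f fSol = fSol := map_lfp _
  have ht : posEqMap H α e' t = t := map_lfp _
  have hw : posEqMap H α (posPlus H e f) w = w := map_lfp _
  have hw_inr : w.comp posInr = fSol :=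
    (lfp_posEqMap_eq_comp α (posPlus_comp_inr e f)).symm
  have hw_inl : posEqMap H α e' (w.comp posInl) = w.comp posInl := by
    conv_rhs => rw [← hw]
    rw [posEqMap_posPlus_comp_inl, hw_inr, hfSol]
  have hupper : w ≤ posElim t fSol := by
    refine lfp_le_fixed _ (posHom_sum_ext ?_ ?_)
    · rw [posEqMap_posPlus_comp_inl]
      have he' : (posSumMap OrderHom.id (posEqMap H α f fSol)).comp e = e' := by rw [hfSol]
      exact (congrArg (posEqMap H α · t) he').trans ht
    · exact (posEqMap_comp α (posPlus_comp_inr e f) _).trans hfSol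
  exact le_antisymm (lfp_le_fixed _ hw_inl) fun x => hupper (Sum.inl x)

end LeastSolution

/-- Let `H : Pos → Pos` be locally order-preserving and `α : HA →o A` an
`H`-algebra carried by a complete lattice.  Then every flat equation morphism
`e : X →o HX + A` has a least solution, namely the least fixed point (by
Knaster–Tarski) of the monotone map `s ↦ [α, id] ∘ (Hs + id) ∘ e` on
`Pos(X, A)`, and this assignment of least solutions makes `A` a complete Elgot
algebra. -/
theorem pos_least_solution_elgot (H : PosFunctor) (A : Type) [CompleteLattice A]
    (α : H.obj (PosCat.of A) →o PosCat.of A) :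
    (∀ (X : PosCat) (e : X →o PosCat.sum (H.obj X) (PosCat.of A)),
      IsLeast {s : X →o PosCat.of A | PosSol H α e s}
        (OrderHom.lfp (posEqMap H α e))) ∧
    ∃ E : PosCompleteElgot H A α,
      ∀ (X : PosCat) (e : X →o PosCat.sum (H.obj X) (PosCat.of A)),
        E.sol X e = OrderHom.lfp (posEqMap H α e) :=
  ⟨fun _ e => isLeast_lfp_posEqMap α e,
    ⟨{ sol := fun _ e => OrderHom.lfp (posEqMap H α e)
       isSol := fun _ e => (isLeast_lfp_posEqMap α e).1
       functorial := fun _ _ _ _ _ hcomm => lfp_posEqMap_eq_comp α hcomm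
       compositional := fun _ _ e f => lfp_posEqMap_compositional α e f },
      fun _ _ => rfl⟩⟩
end

section
/- A unary algebra α : A → A in Set (i.e., an algebra for the identity functor on Set) admits an Elgot algebra structure if and only if α has a fixed point. Moreover, each fixed point a₀ of α yields a complete Elgot algebra structure where, for e : X → X + A, the solution sends x to α^k(a) if there is a sequence x = x₀, …, x_k with e(x_i) = x_{i+1} for i < k and e(x_k) = a ∈ A, and to a₀ otherwise. -/
/-- `s` is a solution of `e : X → X ⊕ A` in the unary algebra `(A, α)`
(`H = Id` on `Set`): `s = [α, id] ∘ (s + id) ∘ e`. -/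
def UnarySol {A X : Type} (α : A → A) (e : X → X ⊕ A) (s : X → A) : Prop :=
  ∀ x, s x = Sum.elim (fun x' => α (s x')) id (e x)

/-- The combined flat equation morphism `f ⊞ e : X ⊕ Y → (X ⊕ Y) ⊕ A`
(for `H = Id`): `(can + id_A) ∘ (id + f) ∘ [e, inr]`. -/
def unaryPlus {X Y A : Type} (e : X → X ⊕ Y) (f : Y → Y ⊕ A) :
    X ⊕ Y → (X ⊕ Y) ⊕ A :=
  Sum.elim
    (fun x => Sum.elim (fun x' => Sum.inl (Sum.inl x'))
      (fun y => Sum.map Sum.inr id (f y)) (e x))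
    (fun y => Sum.map Sum.inr id (f y))

/-- An Elgot algebra structure on the unary algebra `(A, α)`: a choice of
solutions for all finitary flat equation morphisms, satisfying functoriality
and compositionality. -/
structure UnaryElgot (A : Type) (α : A → A) where
  sol : ∀ (X : Type) [Fintype X], (X → X ⊕ A) → (X → A)
  isSol : ∀ (X : Type) [Fintype X] (e : X → X ⊕ A), UnarySol α e (sol X e)
  functorial : ∀ (X Y : Type) [Fintype X] [Fintype Y]
    (e : X → X ⊕ A) (f : Y → Y ⊕ A) (h : X → Y),
    (∀ x, Sum.map h id (e x) = f (h x)) → ∀ x, sol X e x = sol Y f (h x)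
  compositional : ∀ (X Y : Type) [Fintype X] [Fintype Y]
    (e : X → X ⊕ Y) (f : Y → Y ⊕ A) (x : X),
    sol X (fun x' => Sum.map id (sol Y f) (e x')) x =
      sol (X ⊕ Y) (unaryPlus e f) (Sum.inl x)

/-- A complete Elgot algebra structure on the unary algebra `(A, α)`: a choice of
solutions for all flat equation morphisms, satisfying functoriality and
compositionality. -/
structure UnaryCompleteElgot (A : Type) (α : A → A) where
  sol : ∀ (X : Type), (X → X ⊕ A) → (X → A)
  isSol : ∀ (X : Type) (e : X → X ⊕ A), UnarySol α e (sol X e)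
  functorial : ∀ (X Y : Type) (e : X → X ⊕ A) (f : Y → Y ⊕ A) (h : X → Y),
    (∀ x, Sum.map h id (e x) = f (h x)) → ∀ x, sol X e x = sol Y f (h x)
  compositional : ∀ (X Y : Type) (e : X → X ⊕ Y) (f : Y → Y ⊕ A) (x : X),
    sol X (fun x' => Sum.map id (sol Y f) (e x')) x =
      sol (X ⊕ Y) (unaryPlus e f) (Sum.inl x)


/-!
A solution of `e` has to apply `α` once for every step the trajectory of `x` under `e` spends
in `X`: if it leaves `X` after `k` steps at `a`, the value at `x` is forced to be `α^[k] a`.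
On trajectories that never leave `X` the solution equation only demands a value invariant under
`α`, so the constant fixed point `a₀` is a consistent choice. The resulting solution depends
only on the trajectory of `x`, which morphisms of equations and the combination `e ⊞ f` preserve;
this gives functoriality and compositionality.
Conversely, any solution of `x ≈ α x` is a fixed point of `α`.
-/

section Exits

variable {A X Y : Type}

inductive ExitsAt (e : X → X ⊕ A) : X → ℕ → A → Prop
  | inr {x a} : e x = Sum.inr a → ExitsAt e x 0 a
  | inl {x x' k a} : e x = Sum.inl x' → ExitsAt e x' k a → ExitsAt e x (k + 1) a

namespace ExitsAt

variable {e : X → X ⊕ A}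

theorem unique {x : X} {k k' : ℕ} {a a' : A} (h : ExitsAt e x k a) (h' : ExitsAt e x k' a') :
    k = k' ∧ a = a' := by
  induction h generalizing k' with
  | inr hx =>
    cases h' with
    | inr hx' => exact ⟨rfl, Sum.inr_injective (hx.symm.trans hx')⟩
    | inl hx' => simp [hx] at hx'
  | inl hx _ ih =>
    cases h' with
    | inr hx' => simp [hx] at hx'
    | inl hx' h' =>
      cases hx.symm.trans hx'
      exact (ih h').imp (congrArg (· + 1)) id

theorem exists_iff_of_eq_inl {x x' : X} (hx : e x = Sum.inl x') :
    (∃ k a, ExitsAt e x k a) ↔ ∃ k a, ExitsAt e x' k a := by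
  refine ⟨fun ⟨k, a, h⟩ => ?_, fun ⟨k, a, h⟩ => ⟨k + 1, a, .inl hx h⟩⟩
  cases h with
  | inr hx' => simp [hx] at hx'
  | inl hx' h => cases hx.symm.trans hx'; exact ⟨_, a, h⟩

theorem iff_exists_path {x : X} {k : ℕ} {a : A} :
    ExitsAt e x k a ↔ ∃ p : ℕ → X, p 0 = x ∧
      (∀ i < k, e (p i) = Sum.inl (p (i + 1))) ∧ e (p k) = Sum.inr a := by
  constructor
  · intro h
    induction h with
    | inr hx => exact ⟨fun _ => _, rfl, by simp, hx⟩
    | @inl x _ _ _ hx _ ih =>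
      obtain ⟨p, hp0, hstep, hexit⟩ := ih
      refine ⟨fun | 0 => x | i + 1 => p i, rfl, fun i hi => ?_, hexit⟩
      cases i with
      | zero => simpa [hp0] using hx
      | succ i => exact hstep i (by omega)
  · rintro ⟨p, rfl, hstep, hexit⟩
    induction k generalizing p with
    | zero => exact .inr hexit
    | succ k ih =>
      exact .inl (hstep 0 k.succ_pos)
        (ih (p ∘ Nat.succ) (fun i hi => hstep (i + 1) (by omega)) hexit)

theorem map_iff {f : Y → Y ⊕ A} {h : X → Y} (hc : ∀ x, Sum.map h id (e x) = f (h x))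
    {x : X} {k : ℕ} {a : A} : ExitsAt f (h x) k a ↔ ExitsAt e x k a := by
  constructor
  · intro hf
    generalize hy : h x = y at hf
    induction hf generalizing x with
    | inr hfy =>
      rw [← hy, ← hc] at hfy
      rcases hex : e x with _ | a' <;> simp only [hex, Sum.map_inl, Sum.map_inr,
        Sum.inr.injEq, reduceCtorEq] at hfy
      exact .inr (hex.trans (congrArg _ hfy))
    | inl hfy _ ih =>
      rw [← hy, ← hc] at hfy
      rcases hex : e x with x' | _ <;> simp only [hex, Sum.map_inl, Sum.map_inr,
        Sum.inl.injEq, reduceCtorEq] at hfy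
      exact .inl hex (ih hfy)
  · intro he
    induction he with
    | inr hex => exact .inr (by rw [← hc, hex]; rfl)
    | inl hex _ ih => exact .inl (by rw [← hc, hex]; rfl) ih

theorem mapRight_iff {φ : Y → A} {e : X → X ⊕ Y} {x : X} {k : ℕ} {b : A} :
    ExitsAt (fun x => Sum.map id φ (e x)) x k b ↔ ∃ y, ExitsAt e x k y ∧ φ y = b := by
  constructor
  · intro h
    induction h with
    | @inr x _ hx =>
      rcases hex : e x with _ | y <;> simp only [hex, Sum.map_inl, Sum.map_inr,
        Sum.inr.injEq, reduceCtorEq] at hx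
      exact ⟨y, .inr hex, hx⟩
    | @inl x _ _ _ hx _ ih =>
      obtain ⟨y, hy, rfl⟩ := ih
      rcases hex : e x with _ | _ <;> simp only [hex, Sum.map_inl, Sum.map_inr,
        Sum.inl.injEq, reduceCtorEq] at hx
      exact ⟨y, .inl (hex.trans (congrArg _ hx)) hy, rfl⟩
  · rintro ⟨y, h, rfl⟩
    induction h with
    | inr hx => exact .inr (by simp [hx])
    | inl hx _ ih => exact .inl (by simp [hx]) ih

end ExitsAt

end Exits

section ExitSol

variable {A X Y : Type} (α : A → A) (a₀ : A)

open Classical in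
noncomputable def exitSol (e : X → X ⊕ A) (x : X) : A :=
  if h : ∃ k a, ExitsAt e x k a then α^[h.choose] h.choose_spec.choose else a₀

variable {α a₀}

theorem exitSol_of_exitsAt {e : X → X ⊕ A} {x : X} {k : ℕ} {a : A} (h : ExitsAt e x k a) :
    exitSol α a₀ e x = α^[k] a := by
  have hex : ∃ k a, ExitsAt e x k a := ⟨k, a, h⟩
  obtain ⟨rfl, rfl⟩ := hex.choose_spec.choose_spec.unique h
  exact dif_pos hex

theorem exitSol_of_not_exists {e : X → X ⊕ A} {x : X} (h : ¬ ∃ k a, ExitsAt e x k a) :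
    exitSol α a₀ e x = a₀ :=
  dif_neg h

theorem exitSol_isSol (ha₀ : α a₀ = a₀) (e : X → X ⊕ A) : UnarySol α e (exitSol α a₀ e) := by
  intro x
  rcases hx : e x with x' | a
  · by_cases hx' : ∃ k a, ExitsAt e x' k a
    · obtain ⟨k, a, h⟩ := hx'
      rw [Sum.elim_inl, exitSol_of_exitsAt h, exitSol_of_exitsAt (.inl hx h),
        Function.iterate_succ_apply']
    · rw [Sum.elim_inl, exitSol_of_not_exists hx',
        exitSol_of_not_exists ((ExitsAt.exists_iff_of_eq_inl hx).not.mpr hx'), ha₀]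
  · exact exitSol_of_exitsAt (.inr hx)

theorem exitSol_congr {e : X → X ⊕ A} {f : Y → Y ⊕ A} {x : X} {y : Y}
    (h : ∀ k a, ExitsAt e x k a ↔ ExitsAt f y k a) : exitSol α a₀ e x = exitSol α a₀ f y := by
  by_cases hx : ∃ k a, ExitsAt e x k a
  · obtain ⟨k, a, hx⟩ := hx
    rw [exitSol_of_exitsAt hx, exitSol_of_exitsAt ((h k a).mp hx)]
  · rw [exitSol_of_not_exists hx, exitSol_of_not_exists (by simpa only [h] using hx)]

theorem exitSol_functorial {e : X → X ⊕ A} {f : Y → Y ⊕ A} {h : X → Y}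
    (hc : ∀ x, Sum.map h id (e x) = f (h x)) (x : X) :
    exitSol α a₀ e x = exitSol α a₀ f (h x) :=
  exitSol_congr fun _ _ => (ExitsAt.map_iff hc).symm

theorem UnarySol.eq_of_eq {e : X → X ⊕ A} {s : X → A} (hs : UnarySol α e s) {x x' : X}
    (h : e x = e x') : s x = s x' := by
  rw [hs x, hs x', h]

theorem exitSol_unaryPlus_inl_of_exitsAt (ha₀ : α a₀ = a₀) {e : X → X ⊕ Y} {f : Y → Y ⊕ A}
    {x : X} {k : ℕ} {y : Y} (h : ExitsAt e x k y) :
    exitSol α a₀ (unaryPlus e f) (Sum.inl x) = α^[k] (exitSol α a₀ f y) := by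
  induction h with
  | @inr x y hx =>
    calc exitSol α a₀ (unaryPlus e f) (Sum.inl x)
        = exitSol α a₀ (unaryPlus e f) (Sum.inr y) :=
          (exitSol_isSol ha₀ _).eq_of_eq (by simp [unaryPlus, hx])
      _ = exitSol α a₀ f y :=
          (exitSol_functorial (f := unaryPlus e f) (h := Sum.inr) (fun _ => rfl) y).symm
  | @inl x x' k y hx _ ih =>
    rw [(exitSol_isSol ha₀ _) (Sum.inl x), Function.iterate_succ_apply', ← ih]
    simp [unaryPlus, hx]

theorem exists_exitsAt_of_unaryPlus_inl {e : X → X ⊕ Y} {f : Y → Y ⊕ A} {x : X} {n : ℕ}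
    {a : A} (h : ExitsAt (unaryPlus e f) (Sum.inl x) n a) : ∃ k y, ExitsAt e x k y := by
  generalize hz : (Sum.inl x : X ⊕ Y) = z at h
  induction h generalizing x with
  | inr hE =>
    subst hz
    rcases hx : e x with _ | y
    · simp [unaryPlus, hx] at hE
    · exact ⟨0, y, .inr hx⟩
  | inl hE _ ih =>
    subst hz
    rcases hx : e x with x' | y
    · simp only [unaryPlus, hx, Sum.elim_inl, Sum.inl.injEq] at hE
      obtain ⟨k, y, h⟩ := ih hE
      exact ⟨k + 1, y, .inl hx h⟩
    · exact ⟨0, y, .inr hx⟩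

theorem exitSol_compositional (ha₀ : α a₀ = a₀) (e : X → X ⊕ Y) (f : Y → Y ⊕ A) (x : X) :
    exitSol α a₀ (fun x' => Sum.map id (exitSol α a₀ f) (e x')) x =
      exitSol α a₀ (unaryPlus e f) (Sum.inl x) := by
  by_cases hx : ∃ k y, ExitsAt e x k y
  · obtain ⟨k, y, h⟩ := hx
    rw [exitSol_of_exitsAt (ExitsAt.mapRight_iff.mpr ⟨y, h, rfl⟩),
      exitSol_unaryPlus_inl_of_exitsAt ha₀ h]
  · have hg : ¬ ∃ k b, ExitsAt (fun x' => Sum.map id (exitSol α a₀ f) (e x')) x k b :=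
      fun ⟨k, b, h⟩ => hx ⟨k, (ExitsAt.mapRight_iff.mp h).imp fun _ => And.left⟩
    rw [exitSol_of_not_exists hg,
      exitSol_of_not_exists fun ⟨_, _, h⟩ => hx (exists_exitsAt_of_unaryPlus_inl h)]

end ExitSol

noncomputable def UnaryCompleteElgot.ofFixedPoint {A : Type} {α : A → A} {a₀ : A}
    (ha₀ : α a₀ = a₀) : UnaryCompleteElgot A α where
  sol _ := exitSol α a₀
  isSol _ := exitSol_isSol ha₀
  functorial _ _ _ _ _ := exitSol_functorial
  compositional _ _ := exitSol_compositional ha₀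

def UnaryCompleteElgot.toUnaryElgot {A : Type} {α : A → A} (E : UnaryCompleteElgot A α) :
    UnaryElgot A α where
  sol X _ := E.sol X
  isSol X _ := E.isSol X
  functorial X Y _ _ := E.functorial X Y
  compositional X Y _ _ := E.compositional X Y

theorem UnaryElgot.exists_fixedPoint {A : Type} {α : A → A} (E : UnaryElgot A α) :
    ∃ a, α a = a :=
  ⟨_, (E.isSol PUnit (fun _ => Sum.inl PUnit.unit) PUnit.unit).symm⟩

/-- A unary algebra `α : A → A` in `Set` admits an Elgot algebra structure iff
`α` has a fixed point. Moreover, each fixed point `a₀` of `α` yields a complete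
Elgot algebra structure whose solution sends `x` to `α^k(a)` whenever there is a
sequence `x = p₀, …, p_k` with `e (p_i) = p_{i+1}` for `i < k` and `e (p_k) = a ∈ A`,
and to `a₀` otherwise. -/
theorem unary_elgot_iff_fixed_point {A : Type} (α : A → A) :
    (Nonempty (UnaryElgot A α) ↔ ∃ a, α a = a) ∧
      (∀ a₀, α a₀ = a₀ →
        ∃ E : UnaryCompleteElgot A α, ∀ (X : Type) (e : X → X ⊕ A) (x : X),
          (∀ (k : ℕ) (p : ℕ → X) (a : A), p 0 = x →
            (∀ i < k, e (p i) = Sum.inl (p (i + 1))) → e (p k) = Sum.inr a →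
              E.sol X e x = α^[k] a) ∧
          ((¬ ∃ (k : ℕ) (p : ℕ → X) (a : A), p 0 = x ∧
              (∀ i < k, e (p i) = Sum.inl (p (i + 1))) ∧ e (p k) = Sum.inr a) →
            E.sol X e x = a₀)) := by
  refine ⟨⟨fun ⟨E⟩ => E.exists_fixedPoint,
    fun ⟨_, ha⟩ => ⟨(UnaryCompleteElgot.ofFixedPoint ha).toUnaryElgot⟩⟩,
    fun a₀ ha₀ => ⟨.ofFixedPoint ha₀, fun X e x => ⟨?_, fun hno => ?_⟩⟩⟩
  · intro k p a hp0 hstep hexit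
    exact exitSol_of_exitsAt (ExitsAt.iff_exists_path.mpr ⟨p, hp0, hstep, hexit⟩)
  · refine exitSol_of_not_exists fun ⟨k, a, h⟩ => hno ?_
    obtain ⟨p, hp⟩ := ExitsAt.iff_exists_path.mp h
    exact ⟨k, p, a, hp⟩
end

section
/- In every iterative algebra for a polynomial Set functor, each operation symbol σ of arity k has a unique idempotent: there is a unique a ∈ A with σ_A(a, …, a) = a. -/
/-- The polynomial `Set` functor `H_Σ X = Σ₀ + Σ₁ × X + Σ₂ × X² + …` for a
finitary signature `Sig` (where `Sig k` is the set of `k`-ary operation symbols). -/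
def PolyObj (Sig : ℕ → Type) (X : Type) : Type :=
  Σ k : ℕ, Sig k × (Fin k → X)

/-- `s` is a solution of the flat equation morphism `e : X → H_Σ X ⊕ A` in the
`Σ`-algebra `(A, α)`: `s = [α, id] ∘ (H_Σ s + id) ∘ e`. -/
def PolySol {Sig : ℕ → Type} {A X : Type} (α : PolyObj Sig A → A)
    (e : X → PolyObj Sig X ⊕ A) (s : X → A) : Prop :=
  ∀ x, s x = Sum.elim (fun t => α ⟨t.1, t.2.1, fun i => s (t.2.2 i)⟩) id (e x)

def idempotentEquation {Sig : ℕ → Type} {A : Type} {k : ℕ} (σ : Sig k) :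
    Unit → PolyObj Sig Unit ⊕ A :=
  fun _ => Sum.inl ⟨k, σ, fun _ => ()⟩

theorem polySol_idempotentEquation_iff {Sig : ℕ → Type} {A : Type} (α : PolyObj Sig A → A)
    {k : ℕ} (σ : Sig k) (s : Unit → A) :
    PolySol α (idempotentEquation σ) s ↔ α ⟨k, σ, fun _ => s ()⟩ = s () :=
  ⟨fun h => (h ()).symm, fun h _ => h.symm⟩

/-- In every iterative algebra for a polynomial `Set` functor, each operation
symbol `σ` of arity `k` has a unique idempotent: a unique `a` with
`σ_A(a, …, a) = a`. -/
theorem iterative_unique_idempotent {Sig : ℕ → Type} {A : Type}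
    (α : PolyObj Sig A → A)
    (iterative : ∀ (X : Type) (_ : Fintype X) (e : X → PolyObj Sig X ⊕ A),
      ∃! s : X → A, PolySol α e s) :
    ∀ (k : ℕ) (σ : Sig k), ∃! a : A, α ⟨k, σ, fun _ => a⟩ = a := by
  intro k σ
  exact ((Equiv.funUnique Unit A).existsUnique_congr
    (polySol_idempotentEquation_iff α σ)).mp (iterative Unit inferInstance _)
end

section
/- Every solution-preserving morphism between complete Elgot algebras is a homomorphism of H-algebras: if h : (A, α, (-)†) → (B, β, (-)‡) satisfies h ∘ e† = (h ▹ e)‡ for all flat equation morphisms e in A, then h ∘ α = β ∘ Hh. -/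
open CategoryTheory Limits

universe u v

variable {C : Type u} [Category.{v} C] [HasBinaryCoproducts C]

/-- A complete Elgot algebra for `H`: an `H`-algebra `(A, α)` together with a
choice of solution for every flat equation morphism, satisfying functoriality
and compositionality. -/
structure CompleteElgotStr (H : C ⥤ C) (A : C) (α : H.obj A ⟶ A) where
  sol : ∀ {X : C}, (X ⟶ H.obj X ⨿ A) → (X ⟶ A)
  isSol : ∀ {X : C} (e : X ⟶ H.obj X ⨿ A), IsSolution H α e (sol e)
  functorial : ∀ {X Y : C} (e : X ⟶ H.obj X ⨿ A) (f : Y ⟶ H.obj Y ⨿ A) (h : X ⟶ Y),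
    e ≫ coprod.map (H.map h) (𝟙 A) = h ≫ f → sol e = h ≫ sol f
  compositional : ∀ {X Y : C} (e : X ⟶ H.obj X ⨿ Y) (f : Y ⟶ H.obj Y ⨿ A),
    sol (afterEq H e (sol f)) = coprod.inl ≫ sol (plusEq H e f)

/-- `h : A ⟶ B` preserves solutions: `h ∘ e† = (h ▹ e)‡` for every flat
equation morphism `e` in `A`. -/
def SolPreserving {H : C ⥤ C} {A B : C} {α : H.obj A ⟶ A} {β : H.obj B ⟶ B}
    (EA : CompleteElgotStr H A α) (EB : CompleteElgotStr H B β) (h : A ⟶ B) : Prop :=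
  ∀ (X : C) (e : X ⟶ H.obj X ⨿ A), EA.sol e ≫ h = EB.sol (afterEq H e h)

theorem IsSolution.eq_desc_of_map_inr {H : C ⥤ C} {A B : C} {β : H.obj B ⟶ B} {g : A ⟶ B}
    {t : H.obj A ⨿ A ⟶ B} (ht : IsSolution H β (coprod.map (H.map coprod.inr) g) t) :
    t = coprod.desc (H.map g ≫ β) g := by
  have hinr : coprod.inr ≫ t = g := by
    rw [ht]
    simp only [coprod.map_desc, coprod.inr_desc, Category.comp_id]
  refine coprod.hom_ext ?_ (by rw [hinr, coprod.inr_desc])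
  rw [ht]
  simp only [coprod.map_desc, coprod.inl_desc, ← H.map_comp_assoc, hinr]

theorem afterEq_map (H : C ⥤ C) {X Y Z W : C} (f : X ⟶ H.obj (X ⨿ Y)) (g : Y ⟶ Z) (h : Z ⟶ W) :
    afterEq H (coprod.map f g) h = coprod.map f (g ≫ h) := by
  simp [afterEq]

/-- Every solution-preserving morphism between complete Elgot algebras is a
homomorphism of `H`-algebras: `h ∘ α = β ∘ Hh`. -/
theorem solPreserving_isAlgebraHom (H : C ⥤ C) {A B : C}
    {α : H.obj A ⟶ A} {β : H.obj B ⟶ B}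
    (EA : CompleteElgotStr H A α) (EB : CompleteElgotStr H B β)
    (h : A ⟶ B) (hpres : SolPreserving EA EB h) :
    α ≫ h = H.map h ≫ β := by
  -- `α` and `β ∘ Hh` are the left components of the solutions of `H inr + id : HA + A ⟶ H(HA + A) + A`
  -- in `A` and of its renaming by `h` in `B`.
  let e : H.obj A ⨿ A ⟶ H.obj (H.obj A ⨿ A) ⨿ A := coprod.map (H.map coprod.inr) (𝟙 A)
  have hsolA : EA.sol e = coprod.desc (H.map (𝟙 A) ≫ α) (𝟙 A) :=
    (EA.isSol e).eq_desc_of_map_inr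
  have hsolB : EB.sol (afterEq H e h) = coprod.desc (H.map h ≫ β) h := by
    have hsol := EB.isSol (afterEq H e h)
    rw [afterEq_map, Category.id_comp] at hsol ⊢
    exact hsol.eq_desc_of_map_inr
  have hinl := coprod.inl ≫= hpres _ e
  rwa [hsolA, hsolB, coprod.inl_desc_assoc, coprod.inl_desc, H.map_id, Category.id_comp] at hinl
end

section
/- Let (A, α, (-)†) be a complete Elgot algebra and consider the flat equation morphism e = H inr + id_A : HA + A → H(HA + A) + A. Then e† = [α, id_A] : HA + A → A. -/
open CategoryTheory Limits

universe u v

variable {C : Type u} [Category.{v} C] [HasBinaryCoproducts C]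

namespace IsSolution

variable {H : C ⥤ C} {A : C} {α : H.obj A ⟶ A} {s : H.obj A ⨿ A ⟶ A}

theorem inr_comp_of_flipped (hs : IsSolution H α (coprod.map (H.map coprod.inr) (𝟙 A)) s) :
    coprod.inr ≫ s = 𝟙 A := by
  rw [hs, coprod.inr_map_assoc, Category.id_comp, coprod.inr_map_assoc, Category.id_comp,
    coprod.inr_desc]

theorem inl_comp_of_flipped (hs : IsSolution H α (coprod.map (H.map coprod.inr) (𝟙 A)) s) :
    coprod.inl ≫ s = α := by
  conv_lhs => rw [hs]
  rw [coprod.inl_map_assoc, coprod.inl_map_assoc, coprod.inl_desc, ← H.map_comp_assoc,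
    hs.inr_comp_of_flipped, H.map_id, Category.id_comp]

theorem eq_desc_of_flipped (hs : IsSolution H α (coprod.map (H.map coprod.inr) (𝟙 A)) s) :
    s = coprod.desc α (𝟙 A) := by
  ext
  · rw [hs.inl_comp_of_flipped, coprod.inl_desc]
  · rw [hs.inr_comp_of_flipped, coprod.inr_desc]

end IsSolution

/-- In a complete Elgot algebra `(A, α, †)`, the flat equation morphism
`e = H inr + id_A : HA + A ⟶ H(HA + A) + A` has chosen solution
`e† = [α, id_A]`. -/
theorem sol_of_flipped_algebra (H : C ⥤ C) {A : C} (α : H.obj A ⟶ A)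
    (E : CompleteElgotStr H A α) :
    E.sol (coprod.map (H.map (coprod.inr : A ⟶ H.obj A ⨿ A)) (𝟙 A)) =
      coprod.desc α (𝟙 A) :=
  (E.isSol _).eq_desc_of_flipped
end

section
/- Let (A, α, (-)†) be a complete Elgot algebra and m : Y → A a morphism. Then HA + Y carries a complete Elgot algebra structure with algebra map inl ∘ H[α, m] : H(HA + Y) → HA + Y and solutions e‡ := ([H(ē†), id_{HA}] + id_Y) ∘ e for e : X → HX + HA + Y, where ē := (id_{HX} + [α, m]) ∘ e. Moreover [α, m] : HA + Y → A is a solution-preserving morphism. -/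
open CategoryTheory Limits

universe u v

variable {C : Type u} [Category.{v} C] [HasBinaryCoproducts C]

/-!
Everything rests on one identity: `[α, m] ∘ e‡ = ē†`, obtained by unfolding `ē†` once along its
solution equation, since `[α, m] ∘ inl = α`. It is literally solution preservation, and it turns
the solution equation, functoriality and compositionality of `‡` into those of `†`: the last two
because `ē` commutes with equation morphisms (`afterEq_of_comp_map_eq`) and with `⊞`
(`plusEq_afterEq`).
-/

attribute [local simp] coprod.inl_desc coprod.inr_desc coprod.inl_desc_assoc coprod.inr_desc_assoc

section Equations
variable {H : C ⥤ C}

lemma afterEq_afterEq {X Y Z W : C} (e : X ⟶ H.obj X ⨿ Y) (h : Y ⟶ Z) (k : Z ⟶ W) :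
    afterEq H (afterEq H e h) k = afterEq H e (h ≫ k) := by
  simp [afterEq]

lemma afterEq_comp_map {X X' Y Z : C} (e : X ⟶ H.obj X ⨿ Y) (h : Y ⟶ Z) (k : X ⟶ X') :
    afterEq H e h ≫ coprod.map (H.map k) (𝟙 Z) = e ≫ coprod.map (H.map k) h := by
  simp [afterEq]

lemma afterEq_of_comp_map_eq {X X' Y Z : C} {e : X ⟶ H.obj X ⨿ Y} {f : X' ⟶ H.obj X' ⨿ Y}
    {k : X ⟶ X'} (hk : e ≫ coprod.map (H.map k) (𝟙 Y) = k ≫ f) (h : Y ⟶ Z) :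
    afterEq H e h ≫ coprod.map (H.map k) (𝟙 Z) = k ≫ afterEq H f h := by
  rw [afterEq_comp_map, afterEq, ← Category.assoc, ← hk]
  simp

lemma inl_plusEq {X Y A : C} (e : X ⟶ H.obj X ⨿ Y) (f : Y ⟶ H.obj Y ⨿ A) :
    coprod.inl ≫ plusEq H e f =
      e ≫ coprod.desc (H.map coprod.inl ≫ coprod.inl) (f ≫ coprod.map (H.map coprod.inr) (𝟙 A)) := by
  simp only [plusEq, coprod.inl_desc_assoc]
  congr 1
  ext
  · simp
  · simp only [coprod.inr_map_assoc, coprod.inr_desc]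
    congr 1
    ext <;> simp

lemma inr_plusEq {X Y A : C} (e : X ⟶ H.obj X ⨿ Y) (f : Y ⟶ H.obj Y ⨿ A) :
    coprod.inr ≫ plusEq H e f = f ≫ coprod.map (H.map coprod.inr) (𝟙 A) := by
  simp only [plusEq, coprod.inr_desc_assoc, coprod.inr_map_assoc]
  congr 1
  ext <;> simp

lemma plusEq_afterEq {X Y A B : C} (e : X ⟶ H.obj X ⨿ Y) (f : Y ⟶ H.obj Y ⨿ A) (d : A ⟶ B) :
    afterEq H (plusEq H e f) d = plusEq H e (afterEq H f d) := by
  ext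
  · rw [afterEq, ← Category.assoc, inl_plusEq, inl_plusEq, Category.assoc]
    congr 1
    ext <;> simp [afterEq]
  · rw [afterEq, ← Category.assoc, inr_plusEq, inr_plusEq]
    simp [afterEq]

end Equations

namespace CompleteElgotStr
variable {H : C ⥤ C} {A : C} {α : H.obj A ⟶ A} (EA : CompleteElgotStr H A α)

lemma sol_eq {X : C} (e : X ⟶ H.obj X ⨿ A) :
    EA.sol e = e ≫ coprod.desc (H.map (EA.sol e) ≫ α) (𝟙 A) := by
  conv_lhs => rw [EA.isSol e]
  simp

lemma inr_sol_plusEq {X Y : C} (e : X ⟶ H.obj X ⨿ Y) (f : Y ⟶ H.obj Y ⨿ A) :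
    coprod.inr ≫ EA.sol (plusEq H e f) = EA.sol f :=
  (EA.functorial f (plusEq H e f) coprod.inr (inr_plusEq e f).symm).symm

section Coprod
variable {Y : C} (m : Y ⟶ A)

noncomputable def coprodSol {X : C} (e : X ⟶ H.obj X ⨿ (H.obj A ⨿ Y)) : X ⟶ H.obj A ⨿ Y :=
  e ≫ coprod.desc (H.map (EA.sol (afterEq H e (coprod.desc α m))) ≫ coprod.inl) (𝟙 _)

lemma coprodSol_desc {X : C} (e : X ⟶ H.obj X ⨿ (H.obj A ⨿ Y)) :
    EA.coprodSol m e ≫ coprod.desc α m = EA.sol (afterEq H e (coprod.desc α m)) := by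
  conv_rhs => rw [sol_eq]
  simp [coprodSol, afterEq]

lemma isSolution_coprodSol {X : C} (e : X ⟶ H.obj X ⨿ (H.obj A ⨿ Y)) :
    IsSolution H (H.map (coprod.desc α m) ≫ coprod.inl) e (EA.coprodSol m e) := by
  have h := EA.coprodSol_desc m e
  simp only [IsSolution, coprod.map_desc, Category.comp_id, ← H.map_comp_assoc, h]
  rfl

lemma coprodSol_functorial {X X' : C} (e : X ⟶ H.obj X ⨿ (H.obj A ⨿ Y))
    (f : X' ⟶ H.obj X' ⨿ (H.obj A ⨿ Y)) (k : X ⟶ X')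
    (hk : e ≫ coprod.map (H.map k) (𝟙 _) = k ≫ f) :
    EA.coprodSol m e = k ≫ EA.coprodSol m f := by
  have hsol : EA.sol (afterEq H e (coprod.desc α m)) = k ≫ EA.sol (afterEq H f (coprod.desc α m)) :=
    EA.functorial _ _ k (afterEq_of_comp_map_eq hk _)
  calc EA.coprodSol m e
      = (e ≫ coprod.map (H.map k) (𝟙 _)) ≫
          coprod.desc (H.map (EA.sol (afterEq H f (coprod.desc α m))) ≫ coprod.inl) (𝟙 _) := by
        simp [coprodSol, hsol]
    _ = k ≫ EA.coprodSol m f := by rw [hk, Category.assoc, coprodSol]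

lemma coprodSol_compositional {X X' : C} (e : X ⟶ H.obj X ⨿ X')
    (f : X' ⟶ H.obj X' ⨿ (H.obj A ⨿ Y)) :
    EA.coprodSol m (afterEq H e (EA.coprodSol m f)) = coprod.inl ≫ EA.coprodSol m (plusEq H e f) := by
  have hinl : EA.sol (afterEq H (afterEq H e (EA.coprodSol m f)) (coprod.desc α m)) =
      coprod.inl ≫ EA.sol (afterEq H (plusEq H e f) (coprod.desc α m)) := by
    rw [afterEq_afterEq, coprodSol_desc, plusEq_afterEq, EA.compositional]
  have hinr : EA.sol (afterEq H f (coprod.desc α m)) =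
      coprod.inr ≫ EA.sol (afterEq H (plusEq H e f) (coprod.desc α m)) := by
    rw [plusEq_afterEq, inr_sol_plusEq]
  rw [coprodSol, hinl]
  conv_rhs => rw [coprodSol, ← Category.assoc, inl_plusEq]
  rw [coprodSol, hinr]
  simp [afterEq]

noncomputable def onCoprod :
    CompleteElgotStr H (H.obj A ⨿ Y) (H.map (coprod.desc α m) ≫ coprod.inl) where
  sol := EA.coprodSol m
  isSol := EA.isSolution_coprodSol m
  functorial := EA.coprodSol_functorial m
  compositional := EA.coprodSol_compositional m

end Coprod

end CompleteElgotStr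

/-- For a complete Elgot algebra `(A, α, †)` and `m : Y ⟶ A`, the object
`HA + Y` carries a complete Elgot algebra structure with algebra map
`inl ∘ H[α, m]` and solutions `e‡ = ([H(ē†), id_{HA}] + id_Y) ∘ e`
(where `ē = (id + [α, m]) ∘ e`), and `[α, m] : HA + Y ⟶ A` is a
solution-preserving morphism. -/
theorem elgot_on_coproduct (H : C ⥤ C) {A Y : C} (α : H.obj A ⟶ A)
    (EA : CompleteElgotStr H A α) (m : Y ⟶ A) :
    ∃ E : CompleteElgotStr H (H.obj A ⨿ Y) (H.map (coprod.desc α m) ≫ coprod.inl),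
      (∀ (X : C) (e : X ⟶ H.obj X ⨿ (H.obj A ⨿ Y)),
        E.sol e =
          e ≫ coprod.desc
            (H.map (EA.sol (afterEq H e (coprod.desc α m))) ≫ coprod.inl)
            (𝟙 (H.obj A ⨿ Y))) ∧
      SolPreserving E EA (coprod.desc α m) :=
  ⟨EA.onCoprod m, fun _ _ => rfl, fun _ => EA.coprodSol_desc m⟩
end

section
/- Every join semilattice A is an Elgot algebra for the Set functor HX = X × X: defining α : RA → A by sending a rational binary tree to the join of the labels of its (finitely many) leaves, and assigning to each finitary flat equation morphism e : X → X × X + A the solution α ∘ ê, where ê : X → RA is the unique solution of e in the free iterative algebra RA of rational binary trees over A, yields a choice of solutions satisfying functoriality and compositionality. -/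
/-!
The solution of `e` at `x` is the join of the labels `b` reachable from `x` by following `e`
until `e` returns `inr b`. These are exactly the leaf labels of `ê x`: the trees form a flat
equation morphism themselves (via their coalgebra structure), `ê` is a homomorphism into it, and
reachable labels are invariant under homomorphisms of equations. For finite `X` only finitely
many labels occur, so the join exists. The three Elgot axioms then become identities of label
sets: the labels at `x` are those at its two children (or the single label of `x`), a homomorphism
preserves them, and the labels of `e ⊞ f` at `inl x` are the union, over the `y` reachable from
`x` in `e`, of the labels of `f` at `y`, whose join is the join of the solutions of `f` at
those `y`.
-/

/-- The polynomial functor whose final-coalgebra construction gives all (finite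
and infinite) binary trees with leaves labelled in `A`:
`X ↦ (X × X) ⊕ A`. -/
def treeP (A : Type) : PFunctor.{0} :=
  ⟨Unit ⊕ A, fun s => match s with | .inl _ => Bool | .inr _ => Empty⟩

/-- The type of all (finite and infinite) binary trees with leaves labelled
in `A`: the final coalgebra `TA` for `H(-) + A`, `H X = X × X`. -/
def BTree (A : Type) : Type := (treeP A).M

/-- The coalgebra structure corresponding to a flat equation morphism
`e : X → (X × X) ⊕ A`. -/
def treeStep {A X : Type} (e : X → (X × X) ⊕ A) (x : X) : (treeP A).Obj X :=
  match e x with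
  | .inl p => ⟨.inl (), fun (b : Bool) => if b then p.1 else p.2⟩
  | .inr a => ⟨.inr a, Empty.elim⟩

/-- `treeSol e : X → TA` is the unique solution `ê` of the flat equation
morphism `e` in the free completely iterative algebra `TA` of binary trees:
the unique homomorphism into the final coalgebra. -/
def treeSol {A X : Type} (e : X → (X × X) ⊕ A) : X → BTree A :=
  PFunctor.M.corec (treeStep e)

/-- `IsLeaf t a` : `a` is the label of some leaf of the binary tree `t`. -/
inductive IsLeaf {A : Type} : BTree A → A → Prop
  | leaf (t : BTree A) (a : A) : (PFunctor.M.dest t).fst = Sum.inr a → IsLeaf t a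
  | node (t : BTree A) (a : A) (b : (treeP A).B (PFunctor.M.dest t).fst) :
      IsLeaf ((PFunctor.M.dest t).snd b) a → IsLeaf t a

/-- The combined flat equation morphism `f ⊞ e : X ⊕ Y → ((X ⊕ Y) × (X ⊕ Y)) ⊕ A`
for `H X = X × X` on `Set`. -/
def prodPlus {X Y A : Type} (e : X → (X × X) ⊕ Y) (f : Y → (Y × Y) ⊕ A) :
    X ⊕ Y → ((X ⊕ Y) × (X ⊕ Y)) ⊕ A :=
  Sum.elim
    (fun x => Sum.elim (fun p => Sum.inl (Sum.inl p.1, Sum.inl p.2))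
      (fun y => Sum.map (Prod.map Sum.inr Sum.inr) id (f y)) (e x))
    (fun y => Sum.map (Prod.map Sum.inr Sum.inr) id (f y))

/-- An Elgot algebra structure on the algebra `(A, α)` for `H X = X × X` on
`Set`: chosen solutions of all finitary flat equation morphisms, satisfying
functoriality and compositionality. -/
structure ProdElgot (A : Type) (α : A × A → A) where
  sol : ∀ (X : Type) [Fintype X], (X → (X × X) ⊕ A) → (X → A)
  isSol : ∀ (X : Type) [Fintype X] (e : X → (X × X) ⊕ A) (x : X),
    sol X e x = Sum.elim (fun p => α (sol X e p.1, sol X e p.2)) id (e x)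
  functorial : ∀ (X Y : Type) [Fintype X] [Fintype Y]
    (e : X → (X × X) ⊕ A) (f : Y → (Y × Y) ⊕ A) (h : X → Y),
    (∀ x, Sum.map (Prod.map h h) id (e x) = f (h x)) →
      ∀ x, sol X e x = sol Y f (h x)
  compositional : ∀ (X Y : Type) [Fintype X] [Fintype Y]
    (e : X → (X × X) ⊕ Y) (f : Y → (Y × Y) ⊕ A) (x : X),
    sol X (fun x' => Sum.map id (sol Y f) (e x')) x =
      sol (X ⊕ Y) (prodPlus e f) (Sum.inl x)

open Set

inductive Reaches {X B : Type} (e : X → (X × X) ⊕ B) : X → B → Prop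
  | leaf {x : X} {b : B} : e x = .inr b → Reaches e x b
  | left {x p q : X} {b : B} : e x = .inl (p, q) → Reaches e p b → Reaches e x b
  | right {x p q : X} {b : B} : e x = .inl (p, q) → Reaches e q b → Reaches e x b

namespace Reaches

variable {X Y B C : Type} {e : X → (X × X) ⊕ B}

theorem iff_elim {x : X} {b : B} :
    Reaches e x b ↔ Sum.elim (fun c => Reaches e c.1 b ∨ Reaches e c.2 b) (· = b) (e x) := by
  constructor
  · rintro (hx | hx | hx) <;> simp_all
  · rcases hx : e x with ⟨p, q⟩ | c
    · rintro (h | h)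
      exacts [left hx h, right hx h]
    · rintro rfl
      exact leaf hx

theorem iff_of_apply_eq {x x' : X} {b : B} (h : e x = e x') :
    Reaches e x b ↔ Reaches e x' b := by
  rw [iff_elim, h, ← iff_elim]

theorem exists_of_liftRel {f : Y → (Y × Y) ⊕ C} (R : X → Y → Prop) (S : B → C → Prop)
    (hR : ∀ x y, R x y → Sum.LiftRel (fun c d => R c.1 d.1 ∧ R c.2 d.2) S (e x) (f y))
    {x : X} {y : Y} {b : B} (hxy : R x y) (h : Reaches e x b) : ∃ c, S b c ∧ Reaches f y c := by
  induction h generalizing y with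
  | leaf hx =>
    have hv := hx ▸ hR _ y hxy
    generalize hy : f y = v at hv
    cases hv with | inr hs => exact ⟨_, hs, leaf hy⟩
  | left hx _ ih =>
    have hv := hx ▸ hR _ y hxy
    generalize hy : f y = v at hv
    cases hv with | inl hr => obtain ⟨c, hs, h⟩ := ih hr.1; exact ⟨c, hs, left hy h⟩
  | right hx _ ih =>
    have hv := hx ▸ hR _ y hxy
    generalize hy : f y = v at hv
    cases hv with | inl hr => obtain ⟨c, hs, h⟩ := ih hr.2; exact ⟨c, hs, right hy h⟩

theorem hom_iff {f : Y → (Y × Y) ⊕ C} (h : X → Y) (g : B → C)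
    (hh : ∀ x, Sum.map (Prod.map h h) g (e x) = f (h x)) {x : X} {c : C} :
    Reaches f (h x) c ↔ ∃ b, Reaches e x b ∧ g b = c := by
  have lift (x : X) :
      Sum.LiftRel (fun p q => h p.1 = q.1 ∧ h p.2 = q.2) (fun b c => g b = c) (e x) (f (h x)) ∧
        Sum.LiftRel (fun q p => h p.1 = q.1 ∧ h p.2 = q.2) (fun c b => g b = c)
          (f (h x)) (e x) := by
    rw [← hh]
    rcases e x with ⟨p, q⟩ | b <;> simp
  constructor
  · intro hr
    obtain ⟨b, hb, hr⟩ := exists_of_liftRel (fun y x => h x = y) (fun c b => g b = c)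
      (by rintro _ x rfl; exact (lift x).2) rfl hr
    exact ⟨b, hr, hb⟩
  · rintro ⟨b, hr, rfl⟩
    obtain ⟨_, rfl, hr⟩ := exists_of_liftRel (fun x y => h x = y) (fun b c => g b = c)
      (by rintro x _ rfl; exact (lift x).1) rfl hr
    exact hr

theorem iff_of_hom {f : Y → (Y × Y) ⊕ B} (h : X → Y)
    (hh : ∀ x, Sum.map (Prod.map h h) id (e x) = f (h x)) {x : X} {b : B} :
    Reaches e x b ↔ Reaches f (h x) b := by
  simp [hom_iff h id hh]

theorem relabel_iff (g : B → C) {x : X} {c : C} :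
    Reaches (fun x => Sum.map id g (e x)) x c ↔ ∃ b, Reaches e x b ∧ g b = c :=
  hom_iff id g fun _ => by simp

theorem finite_setOf [Finite X] (e : X → (X × X) ⊕ B) (x : X) :
    {b | Reaches e x b}.Finite := by
  refine ((finite_range e).preimage Sum.inr_injective.injOn).subset fun b hb => ?_
  induction hb with
  | leaf hx => exact ⟨_, hx⟩
  | left _ _ ih | right _ _ ih => exact ih

end Reaches

def treeEqn {A : Type} (t : BTree A) : (BTree A × BTree A) ⊕ A :=
  match PFunctor.M.dest t with
  | ⟨.inl (), c⟩ => .inl (c true, c false)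
  | ⟨.inr a, _⟩ => .inr a

theorem treeEqn_treeSol {A X : Type} (e : X → (X × X) ⊕ A) (x : X) :
    treeEqn (treeSol e x) = Sum.map (Prod.map (treeSol e) (treeSol e)) id (e x) := by
  rw [treeEqn, treeSol, PFunctor.M.dest_corec, treeStep]
  rcases e x with ⟨p, q⟩ | a <;> rfl

theorem IsLeaf.of_treeEqn {A : Type} {t : BTree A} {a : A}
    (h : Sum.elim (fun c => IsLeaf c.1 a ∨ IsLeaf c.2 a) (· = a) (treeEqn t)) : IsLeaf t a := by
  induction t using PFunctor.M.casesOn' with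
  | f s c =>
    rcases s with _ | _
    · rcases h with h | h
      exacts [.node _ a true h, .node _ a false h]
    · exact .leaf _ a (congrArg Sum.inr h)

theorem isLeaf_iff_reaches_treeEqn {A : Type} {t : BTree A} {a : A} :
    IsLeaf t a ↔ Reaches treeEqn t a := by
  constructor
  · intro h
    induction h with
    | leaf t a ht =>
      induction t using PFunctor.M.casesOn' with
      | f s c =>
        obtain rfl : s = .inr a := ht
        exact .leaf rfl
    | node t a b _ ih =>
      induction t using PFunctor.M.casesOn' with
      | f s c =>
        rcases s with _ | _
        · cases b
          exacts [.right rfl ih, .left rfl ih]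
        · exact b.elim
  · intro h
    induction h with
    | leaf ht => exact .of_treeEqn (by simp [ht])
    | left ht _ ih | right ht _ ih => exact .of_treeEqn (by simp [ht, ih])

theorem isLeaf_treeSol_iff {A X : Type} {e : X → (X × X) ⊕ A} {x : X} {a : A} :
    IsLeaf (treeSol e x) a ↔ Reaches e x a :=
  isLeaf_iff_reaches_treeEqn.trans
    (Reaches.iff_of_hom (treeSol e) fun x => (treeEqn_treeSol e x).symm).symm

section prodPlus

variable {X Y A : Type} {e : X → (X × X) ⊕ Y} {f : Y → (Y × Y) ⊕ A} {a : A}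

theorem prodPlus_inl_of_eq_inl {x p q : X} (he : e x = .inl (p, q)) :
    prodPlus e f (.inl x) = .inl (.inl p, .inl q) := by
  simp [prodPlus, he]

theorem Reaches.prodPlus_inr_iff {y : Y} : Reaches (prodPlus e f) (.inr y) a ↔ Reaches f y a :=
  (iff_of_hom (e := f) (f := prodPlus e f) Sum.inr fun _ => rfl).symm

theorem Reaches.prodPlus_inl_iff_of_eq_inr {x : X} {y : Y} (he : e x = .inr y) :
    Reaches (prodPlus e f) (.inl x) a ↔ Reaches f y a :=
  (iff_of_apply_eq (by simp [prodPlus, he])).trans prodPlus_inr_iff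

theorem Reaches.prodPlus_inl_iff {x : X} :
    Reaches (prodPlus e f) (.inl x) a ↔ ∃ y, Reaches e x y ∧ Reaches f y a := by
  constructor
  · intro h
    generalize hz : Sum.inl x = z at h
    induction h generalizing x with
    | leaf hz' =>
      subst hz
      rcases he : e x with ⟨p, q⟩ | y
      · simp [prodPlus_inl_of_eq_inl he] at hz'
      · exact ⟨y, .leaf he, (prodPlus_inl_iff_of_eq_inr he).1 (.leaf hz')⟩
    | left hz' hp ih =>
      subst hz
      rcases he : e x with ⟨p', q'⟩ | y
      · rw [prodPlus_inl_of_eq_inl he, Sum.inl.injEq, Prod.mk.injEq] at hz'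
        obtain ⟨y, hy, hfy⟩ := ih hz'.1
        exact ⟨y, .left he hy, hfy⟩
      · exact ⟨y, .leaf he, (prodPlus_inl_iff_of_eq_inr he).1 (.left hz' hp)⟩
    | right hz' hq ih =>
      subst hz
      rcases he : e x with ⟨p', q'⟩ | y
      · rw [prodPlus_inl_of_eq_inl he, Sum.inl.injEq, Prod.mk.injEq] at hz'
        obtain ⟨y, hy, hfy⟩ := ih hz'.2
        exact ⟨y, .right he hy, hfy⟩
      · exact ⟨y, .leaf he, (prodPlus_inl_iff_of_eq_inr he).1 (.right hz' hq)⟩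
  · rintro ⟨y, hy, hfy⟩
    induction hy with
    | leaf he => exact (prodPlus_inl_iff_of_eq_inr he).2 hfy
    | left he _ ih => exact .left (prodPlus_inl_of_eq_inl he) (ih hfy)
    | right he _ ih => exact .right (prodPlus_inl_of_eq_inl he) (ih hfy)

end prodPlus

theorem isLUB_biUnion_of_isLUB_image {ι α : Type} [Preorder α] {s : Set ι} {t : ι → Set α}
    {u : ι → α} (ht : ∀ i ∈ s, IsLUB (t i) (u i)) {c : α} (hc : IsLUB (u '' s) c) :
    IsLUB (⋃ i ∈ s, t i) c := by
  rw [biUnion_eq_iUnion, ← isLUB_iUnion_iff_of_isLUB fun i : s => ht i i.2, ← image_eq_range]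
  exact hc

section leafSup

variable {X Y A : Type} [SemilatticeSup A] [OrderBot A]

noncomputable def leafSup [Finite X] (e : X → (X × X) ⊕ A) (x : X) : A :=
  (Reaches.finite_setOf e x).toFinset.sup id

variable [Finite X] [Finite Y]

theorem isLUB_leafSup (e : X → (X × X) ⊕ A) (x : X) :
    IsLUB {a | Reaches e x a} (leafSup e x) := by
  simpa [leafSup] using (Reaches.finite_setOf e x).toFinset.isLUB_sup_id

theorem leafSup_eq_of_isLUB {e : X → (X × X) ⊕ A} {x : X} {a : A}
    (h : IsLUB {a | Reaches e x a} a) : leafSup e x = a :=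
  (isLUB_leafSup e x).unique h

theorem leafSup_eq_elim (e : X → (X × X) ⊕ A) (x : X) :
    leafSup e x = Sum.elim (fun p => leafSup e p.1 ⊔ leafSup e p.2) id (e x) := by
  apply leafSup_eq_of_isLUB
  rcases hx : e x with ⟨p, q⟩ | a
  · have : {a | Reaches e x a} = {a | Reaches e p a} ∪ {a | Reaches e q a} := by
      ext; simp [Reaches.iff_elim (x := x), hx]
    rw [this]
    exact (isLUB_leafSup e p).union (isLUB_leafSup e q)
  · have : {b | Reaches e x b} = {a} := by
      ext; simp [Reaches.iff_elim (x := x), hx, eq_comm]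
    rw [this]
    exact isLUB_singleton

theorem leafSup_eq_of_hom {e : X → (X × X) ⊕ A} {f : Y → (Y × Y) ⊕ A} (h : X → Y)
    (hh : ∀ x, Sum.map (Prod.map h h) id (e x) = f (h x)) (x : X) :
    leafSup e x = leafSup f (h x) := by
  simp only [leafSup, Reaches.iff_of_hom h hh]

theorem leafSup_subst (e : X → (X × X) ⊕ Y) (f : Y → (Y × Y) ⊕ A) (x : X) :
    leafSup (fun x' => Sum.map id (leafSup f) (e x')) x = leafSup (prodPlus e f) (.inl x) := by
  refine (leafSup_eq_of_isLUB ?_).symm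
  have hP : {a | Reaches (prodPlus e f) (.inl x) a} =
      ⋃ y ∈ {y | Reaches e x y}, {a | Reaches f y a} := by
    ext; simp [Reaches.prodPlus_inl_iff]
  have hS : {a | Reaches (fun x' => Sum.map id (leafSup f) (e x')) x a} =
      leafSup f '' {y | Reaches e x y} := by
    ext; simp [Reaches.relabel_iff]
  rw [hP]
  exact isLUB_biUnion_of_isLUB_image (fun y _ => isLUB_leafSup f y) (hS ▸ isLUB_leafSup _ x)

end leafSup

/-- Every join semilattice `A` (with a least element, so that the empty join
exists) is an Elgot algebra for `H X = X × X` on `Set`: there is a choice of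
solutions of finitary flat equation morphisms, satisfying functoriality and
compositionality, where the solution at `x` is the join of the labels of the
(finitely many) leaves of the rational binary tree `ê x`, `ê` being the unique
solution of `e` in the free iterative algebra of rational binary trees over
`A`.  (Here `ê x = treeSol e x` is the tree unfolding of the finitary flat
equation morphism `e`, which is a rational tree, and "the join of the leaf
labels" is expressed by `IsLUB`.) -/
theorem semilattice_elgot {A : Type} [SemilatticeSup A] [OrderBot A] :
    ∃ E : ProdElgot A (fun p => p.1 ⊔ p.2),
      ∀ (X : Type) [Fintype X] (e : X → (X × X) ⊕ A) (x : X),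
        IsLUB {a | IsLeaf (treeSol e x) a} (E.sol X e x) := by
  refine ⟨{ sol := fun _ _ e => leafSup e
            isSol := fun _ _ => leafSup_eq_elim
            functorial := fun _ _ _ _ _ _ => leafSup_eq_of_hom
            compositional := fun _ _ _ _ => leafSup_subst }, fun X _ e x => ?_⟩
  simpa only [isLeaf_treeSol_iff] using isLUB_leafSup e x
end
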